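/- arXiv:1606.05197 — 5 statements merged into one kernel-verified Lean document; each statement's English description precedes it below -/
import Mathlib

section
/- Let T > 0, let a, b ∈ L¹([t₀, t₀+T]; ℝ) with b(t) ≥ 0 for almost every t ∈ [t₀, t₀+T], and let 0 ≤ α < 1. If an absolutely continuous function w : [t₀, t₀+T] → [0,∞) satisfies (1−α) w′(t) ≤ a(t) w(t) + b(t) w(t)^α for almost every t ∈ [t₀, t₀+T], then for all t ∈ [t₀, t₀+T] one has w(t)^{1−α} ≤ w(t₀)^{1−α} exp(∫_{t₀}^t a(τ) dτ) + ∫_{t₀}^t exp(∫_s^t a(τ) dτ) b(s) ds. -/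
/-!
For `ε > 0` put `v = (w + ε) ^ (1 - α)`. Unlike `x ↦ x ^ (1 - α)`, the map `x ↦ (x + ε) ^ (1 - α)`
is Lipschitz on `[0, ∞)`, so `v` is absolutely continuous, and by the chain rule and the hypothesis
`v' ≤ (w + ε) ^ (-α) (a w + b w ^ α) ≤ a v + ε ^ (1 - α) |a| + b` almost everywhere, because
`(w + ε) ^ (-α) w = v - ε (w + ε) ^ (-α)` with `0 ≤ ε (w + ε) ^ (-α) ≤ ε ^ (1 - α)`, and
`(w + ε) ^ (-α) w ^ α ≤ 1`. The linear Gronwall inequality for absolutely continuous functions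
(integrating factor `exp (-∫ a)` and the fundamental theorem of calculus) bounds `v`; letting
`ε → 0` gives the claim.
-/

open Set MeasureTheory Filter Topology

theorem rpow_neg_mul_add_mul_rpow_le {α ε x p q : ℝ} (hα : 0 ≤ α) (hε : 0 < ε) (hx : 0 ≤ x)
    (hq : 0 ≤ q) :
    (x + ε) ^ (-α) * (p * x + q * x ^ α) ≤ p * (x + ε) ^ (1 - α) + (ε ^ (1 - α) * |p| + q) := by
  have hxε : 0 < x + ε := by linarith
  have hpow : ∀ y : ℝ, 0 < y → y ^ (1 - α) = y * y ^ (-α) := fun y hy => by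
    rw [sub_eq_add_neg, Real.rpow_add hy, Real.rpow_one]
  have hshift : ε * (x + ε) ^ (-α) ≤ ε ^ (1 - α) := by
    rw [hpow ε hε]
    exact mul_le_mul_of_nonneg_left
      (Real.rpow_le_rpow_of_nonpos hε (by linarith) (neg_nonpos.2 hα)) hε.le
  have hratio : x ^ α * (x + ε) ^ (-α) ≤ 1 := by
    rw [Real.rpow_neg hxε.le, ← div_eq_mul_inv]
    exact div_le_one_of_le₀ (Real.rpow_le_rpow hx (by linarith) hα) (by positivity)
  calc (x + ε) ^ (-α) * (p * x + q * x ^ α)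
      = p * (x + ε) ^ (1 - α) - p * (ε * (x + ε) ^ (-α)) + q * (x ^ α * (x + ε) ^ (-α)) := by
        rw [hpow _ hxε]; ring
    _ ≤ p * (x + ε) ^ (1 - α) + |p| * ε ^ (1 - α) + q * 1 := by
        have hp : -(p * (ε * (x + ε) ^ (-α))) ≤ |p| * ε ^ (1 - α) :=
          calc -(p * (ε * (x + ε) ^ (-α))) ≤ |p| * (ε * (x + ε) ^ (-α)) := by
                rw [← neg_mul]; gcongr; exact neg_le_abs p
            _ ≤ |p| * ε ^ (1 - α) := by gcongr
        linarith [mul_le_mul_of_nonneg_left hratio hq]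
    _ = _ := by ring

namespace AbsolutelyContinuousOnInterval

section Metric

variable {X Y : Type*} [PseudoMetricSpace X] [PseudoMetricSpace Y] {f g : ℝ → X} {a b : ℝ}

theorem congr (hf : AbsolutelyContinuousOnInterval f a b) (hfg : EqOn f g (uIcc a b)) :
    AbsolutelyContinuousOnInterval g a b := by
  refine hf.congr' (eventually_inf_principal.2 (Eventually.of_forall fun E hE => ?_))
  exact Finset.sum_congr rfl fun i hi => by rw [hfg (hE.1 i hi).1, hfg (hE.1 i hi).2]

theorem comp_lipschitzOnWith {φ : X → Y} {s : Set X} {K : NNReal}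
    (hφ : LipschitzOnWith K φ s) (hf : AbsolutelyContinuousOnInterval f a b)
    (hfs : MapsTo f (uIcc a b) s) : AbsolutelyContinuousOnInterval (φ ∘ f) a b := by
  rw [absolutelyContinuousOnInterval_iff] at hf ⊢
  intro ε hε
  obtain ⟨δ, hδ, hfδ⟩ := hf (ε / (K + 1)) (by positivity)
  refine ⟨δ, hδ, fun E hE hEδ => ?_⟩
  calc ∑ i ∈ Finset.range E.1, dist (φ (f (E.2 i).1)) (φ (f (E.2 i).2))
      ≤ ∑ i ∈ Finset.range E.1, K * dist (f (E.2 i).1) (f (E.2 i).2) :=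
        Finset.sum_le_sum fun i hi =>
          hφ.dist_le_mul _ (hfs (hE.1 i hi).1) _ (hfs (hE.1 i hi).2)
    _ = K * ∑ i ∈ Finset.range E.1, dist (f (E.2 i).1) (f (E.2 i).2) := by rw [Finset.mul_sum]
    _ ≤ K * (ε / (K + 1)) := by gcongr; exact (hfδ E hE hEδ).le
    _ < ε := by
      rw [mul_div_assoc', div_lt_iff₀ (by positivity)]
      nlinarith

end Metric

theorem comp_locallyLipschitzOn {F Y : Type*} [SeminormedAddCommGroup F] [PseudoMetricSpace Y]
    {f : ℝ → F} {a b : ℝ} {φ : F → Y} {s : Set F}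
    (hφ : LocallyLipschitzOn s φ) (hf : AbsolutelyContinuousOnInterval f a b)
    (hfs : MapsTo f (uIcc a b) s) : AbsolutelyContinuousOnInterval (φ ∘ f) a b := by
  have hc : IsCompact (f '' uIcc a b) := isCompact_uIcc.image_of_continuousOn hf.continuousOn
  have hl : LocallyLipschitzOn (f '' uIcc a b) φ := hφ.mono hfs.image_subset
  obtain ⟨K, hK⟩ := hl.exists_lipschitzOnWith_of_compact hc
  exact hf.comp_lipschitzOnWith hK (mapsTo_image f _)

theorem le_gronwall_of_deriv_le {u k c : ℝ → ℝ} {a b : ℝ} (hab : a ≤ b)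
    (hu : AbsolutelyContinuousOnInterval u a b) (hk : IntervalIntegrable k volume a b)
    (hc : IntervalIntegrable c volume a b)
    (hle : ∀ᵐ x, x ∈ Icc a b → deriv u x ≤ k x * u x + c x) :
    u b ≤ u a * Real.exp (∫ x in a..b, k x) + ∫ s in a..b, Real.exp (∫ x in s..b, k x) * c s := by
  set A : ℝ → ℝ := fun x => ∫ t in a..x, k t
  set E : ℝ → ℝ := fun x => Real.exp (-A x)
  have hA : AbsolutelyContinuousOnInterval A a b :=
    hk.absolutelyContinuousOnInterval_intervalIntegral left_mem_uIcc
  have hE : AbsolutelyContinuousOnInterval E a b :=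
    hA.neg.comp_locallyLipschitzOn (φ := Real.exp)
      Real.contDiff_exp.locallyLipschitz.locallyLipschitzOn (mapsTo_univ _ _)
  have hEc : IntervalIntegrable (fun x => E x * c x) volume a b :=
    hc.continuousOn_mul hE.continuousOn
  set I : ℝ → ℝ := fun x => ∫ t in a..x, E t * c t
  have hI : AbsolutelyContinuousOnInterval I a b :=
    hEc.absolutelyContinuousOnInterval_intervalIntegral left_mem_uIcc
  set g : ℝ → ℝ := fun x => E x * u x - I x
  have hg : AbsolutelyContinuousOnInterval g a b := (hE.fun_mul hu).fun_sub hI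
  have hg_deriv : ∀ᵐ x ∂volume.restrict (Icc a b), deriv g x ≤ 0 := by
    rw [ae_restrict_iff' measurableSet_Icc]
    filter_upwards [hle, hu.ae_differentiableAt, hk.ae_hasDerivAt_integral,
      hEc.ae_hasDerivAt_integral] with x hux hu' hA' hI' hx
    have hx' : x ∈ uIcc a b := Icc_subset_uIcc hx
    have hE' : HasDerivAt E (E x * -k x) x := (hA' hx' a left_mem_uIcc).neg.exp
    have hg' : HasDerivAt g (E x * -k x * u x + E x * deriv u x - E x * c x) x :=
      (hE'.mul (hu' hx').hasDerivAt).sub (hI' hx' a left_mem_uIcc)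
    rw [hg'.deriv]
    have := mul_le_mul_of_nonneg_left (hux hx) (Real.exp_pos (-A x)).le
    linarith
  have hg_anti : g b ≤ g a := by
    have := intervalIntegral.integral_mono_ae_restrict hab hg.intervalIntegrable_deriv
      intervalIntegrable_const hg_deriv
    rw [hg.integral_deriv_eq_sub] at this
    simpa using this
  have hga : g a = u a := by simp [g, E, I, A]
  have hexp : ∫ s in a..b, Real.exp (∫ x in s..b, k x) * c s = Real.exp (A b) * I b := by
    rw [← intervalIntegral.integral_const_mul]
    refine intervalIntegral.integral_congr fun s hs => ?_
    have hs' : IntervalIntegrable k volume a s := hk.mono_set (uIcc_subset_uIcc_left hs)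
    simp only [E, ← mul_assoc, ← Real.exp_add, ← sub_eq_add_neg, A,
      intervalIntegral.integral_interval_sub_left hk hs']
  calc u b = Real.exp (A b) * (E b * u b) := by
        rw [← mul_assoc, ← Real.exp_add, add_neg_cancel, Real.exp_zero, one_mul]
    _ ≤ Real.exp (A b) * (u a + I b) := by
        gcongr
        linarith
    _ = _ := by rw [hexp]; ring

variable {w a b : ℝ → ℝ} {t₀ t₁ α : ℝ}

theorem add_rpow_le_of_deriv_le_mul_add_mul_rpow {ε : ℝ} (hε : 0 < ε) (ht : t₀ ≤ t₁)
    (hα0 : 0 ≤ α) (hw : AbsolutelyContinuousOnInterval w t₀ t₁)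
    (hw0 : ∀ t ∈ Icc t₀ t₁, 0 ≤ w t) (ha : IntervalIntegrable a volume t₀ t₁)
    (hb : IntervalIntegrable b volume t₀ t₁) (hb0 : ∀ᵐ t, t ∈ Icc t₀ t₁ → 0 ≤ b t)
    (hineq : ∀ᵐ t, t ∈ Icc t₀ t₁ → (1 - α) * deriv w t ≤ a t * w t + b t * w t ^ α) :
    (w t₁ + ε) ^ (1 - α) ≤ (w t₀ + ε) ^ (1 - α) * Real.exp (∫ τ in t₀..t₁, a τ) +
      ∫ s in t₀..t₁, Real.exp (∫ τ in s..t₁, a τ) * (ε ^ (1 - α) * |a s| + b s) := by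
  set v : ℝ → ℝ := fun t => (w t + ε) ^ (1 - α)
  have hv : AbsolutelyContinuousOnInterval v t₀ t₁ := by
    refine hw.comp_locallyLipschitzOn (φ := fun x => (x + ε) ^ (1 - α)) (s := Ici 0)
      (ContDiffOn.locallyLipschitzOn (convex_Ici 0) fun x hx => ?_) ?_
    · exact ((contDiffAt_id.add contDiffAt_const).rpow_const_of_ne
        (by simp only [id]; linarith [mem_Ici.1 hx])).contDiffWithinAt
    · rw [uIcc_of_le ht]; exact hw0
  refine hv.le_gronwall_of_deriv_le ht ha ((ha.abs.const_mul _).add hb) ?_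
  filter_upwards [hineq, hb0, hw.ae_differentiableAt] with t hineqt hbt hwt hmem
  have hv' : HasDerivAt v (deriv w t * (1 - α) * (w t + ε) ^ (1 - α - 1)) t :=
    ((hwt (Icc_subset_uIcc hmem)).hasDerivAt.add_const ε).rpow_const
      (Or.inl (by linarith [hw0 t hmem]))
  rw [hv'.deriv, sub_sub_cancel_left]
  calc deriv w t * (1 - α) * (w t + ε) ^ (-α)
      = (w t + ε) ^ (-α) * ((1 - α) * deriv w t) := by ring
    _ ≤ (w t + ε) ^ (-α) * (a t * w t + b t * w t ^ α) :=
        mul_le_mul_of_nonneg_left (hineqt hmem) (Real.rpow_nonneg (by linarith [hw0 t hmem]) _)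
    _ ≤ _ := rpow_neg_mul_add_mul_rpow_le hα0 hε (hw0 t hmem) (hbt hmem)

theorem rpow_le_of_deriv_le_mul_add_mul_rpow (ht : t₀ ≤ t₁) (hα0 : 0 ≤ α) (hα1 : α < 1)
    (hw : AbsolutelyContinuousOnInterval w t₀ t₁)
    (hw0 : ∀ t ∈ Icc t₀ t₁, 0 ≤ w t) (ha : IntervalIntegrable a volume t₀ t₁)
    (hb : IntervalIntegrable b volume t₀ t₁) (hb0 : ∀ᵐ t, t ∈ Icc t₀ t₁ → 0 ≤ b t)
    (hineq : ∀ᵐ t, t ∈ Icc t₀ t₁ → (1 - α) * deriv w t ≤ a t * w t + b t * w t ^ α) :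
    w t₁ ^ (1 - α) ≤ w t₀ ^ (1 - α) * Real.exp (∫ τ in t₀..t₁, a τ) +
      ∫ s in t₀..t₁, Real.exp (∫ τ in s..t₁, a τ) * b s := by
  have hβ : 0 < 1 - α := by linarith
  set K : ℝ → ℝ := fun s => Real.exp (∫ τ in s..t₁, a τ)
  have hK : ContinuousOn K (uIcc t₀ t₁) :=
    Real.continuous_exp.comp_continuousOn
      (intervalIntegral.continuousOn_primitive_interval_left
        ((intervalIntegrable_iff' (μ := volume)).1 ha))
  set bound : ℝ → ℝ := fun ε => (w t₀ + ε) ^ (1 - α) * Real.exp (∫ τ in t₀..t₁, a τ) +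
    (ε ^ (1 - α) * ∫ s in t₀..t₁, K s * |a s|) + ∫ s in t₀..t₁, K s * b s
  have hreg : ∀ ε > 0, w t₁ ^ (1 - α) ≤ bound ε := by
    intro ε hε
    have hsplit : ∫ s in t₀..t₁, K s * (ε ^ (1 - α) * |a s| + b s) =
        (ε ^ (1 - α) * ∫ s in t₀..t₁, K s * |a s|) + ∫ s in t₀..t₁, K s * b s := by
      rw [← intervalIntegral.integral_const_mul, ← intervalIntegral.integral_add
        ((ha.abs.continuousOn_mul hK).const_mul _) (hb.continuousOn_mul hK)]
      congr 1 with s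
      ring
    calc w t₁ ^ (1 - α) ≤ (w t₁ + ε) ^ (1 - α) :=
          Real.rpow_le_rpow (hw0 t₁ ⟨ht, le_rfl⟩) (by linarith) hβ.le
      _ ≤ _ := add_rpow_le_of_deriv_le_mul_add_mul_rpow hε ht hα0 hw hw0 ha hb hb0 hineq
      _ = bound ε := by rw [hsplit]; ring
  have hbound : ContinuousAt bound 0 := by
    have hr : ∀ x : ℝ, ContinuousAt (fun y : ℝ => y ^ (1 - α)) x :=
      fun x => Real.continuousAt_rpow_const x _ (Or.inr hβ.le)
    fun_prop
  have hlim : Tendsto bound (𝓝[>] 0)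
      (𝓝 (w t₀ ^ (1 - α) * Real.exp (∫ τ in t₀..t₁, a τ) + ∫ s in t₀..t₁, K s * b s)) := by
    simpa [bound, Real.zero_rpow hβ.ne'] using hbound.tendsto.mono_left nhdsWithin_le_nhds
  exact ge_of_tendsto hlim (eventually_nhdsWithin_of_forall hreg)

end AbsolutelyContinuousOnInterval

theorem gronwall_power_inequality_general
    (t₀ T : ℝ)
    (a b : ℝ → ℝ)
    (ha : IntegrableOn a (Icc t₀ (t₀ + T)))
    (hb : IntegrableOn b (Icc t₀ (t₀ + T)))
    (hb_nonneg : ∀ᵐ t ∂(volume.restrict (Icc t₀ (t₀ + T))), 0 ≤ b t)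
    (α : ℝ) (hα0 : 0 ≤ α) (hα1 : α < 1)
    (w w' : ℝ → ℝ)
    (hw_nonneg : ∀ t ∈ Icc t₀ (t₀ + T), 0 ≤ w t)
    (hw'_int : IntegrableOn w' (Icc t₀ (t₀ + T)))
    (hw_AC : ∀ t ∈ Icc t₀ (t₀ + T), w t = w t₀ + ∫ s in t₀..t, w' s)
    (hw_deriv : ∀ᵐ t ∂(volume.restrict (Icc t₀ (t₀ + T))), HasDerivAt w (w' t) t)
    (hineq : ∀ᵐ t ∂(volume.restrict (Icc t₀ (t₀ + T))),
      (1 - α) * w' t ≤ a t * w t + b t * w t ^ α) :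
    ∀ t ∈ Icc t₀ (t₀ + T),
      w t ^ (1 - α) ≤ w t₀ ^ (1 - α) * Real.exp (∫ τ in t₀..t, a τ) +
        ∫ s in t₀..t, Real.exp (∫ τ in s..t, a τ) * b s := by
  intro t ht
  have hsub : Icc t₀ t ⊆ Icc t₀ (t₀ + T) := Icc_subset_Icc_right ht.2
  have hrestrict : ∀ {f : ℝ → ℝ}, IntegrableOn f (Icc t₀ (t₀ + T)) →
      IntervalIntegrable f volume t₀ t :=
    fun hf => (hf.mono_set (uIcc_of_le ht.1 ▸ hsub)).intervalIntegrable
  have hae : ∀ {P : ℝ → Prop}, (∀ᵐ x ∂volume.restrict (Icc t₀ (t₀ + T)), P x) →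
      ∀ᵐ x, x ∈ Icc t₀ t → P x :=
    fun h => ((ae_restrict_iff' measurableSet_Icc).1 h).mono fun x hx hxt => hx (hsub hxt)
  have hw : AbsolutelyContinuousOnInterval w t₀ t :=
    ((LipschitzWith.const (w t₀)).lipschitzOnWith.absolutelyContinuousOnInterval.fun_add
      ((hrestrict hw'_int).absolutelyContinuousOnInterval_intervalIntegral left_mem_uIcc)).congr
      fun x hx => (hw_AC x (hsub (uIcc_of_le ht.1 ▸ hx))).symm
  refine AbsolutelyContinuousOnInterval.rpow_le_of_deriv_le_mul_add_mul_rpow ht.1 hα0 hα1 hw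
    (fun x hx => hw_nonneg x (hsub hx)) (hrestrict ha) (hrestrict hb) (hae hb_nonneg) ?_
  filter_upwards [hae hineq, hae hw_deriv] with x hineqx hderiv hx
  rw [(hderiv hx).deriv]
  exact hineqx hx

/-- Gronwall-type inequality (Lemma 4.1 in Showalter / Lemma 2.2 of the paper):
if `w` is a nonnegative absolutely continuous function on `[t₀, t₀ + T]`
(with a.e. derivative `w'`) satisfying
`(1 - α) w'(t) ≤ a(t) w(t) + b(t) w(t)^α` a.e., with `a, b ∈ L¹`, `b ≥ 0` a.e.
and `0 ≤ α < 1`, then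
`w(t)^(1-α) ≤ w(t₀)^(1-α) exp(∫_{t₀}^t a) + ∫_{t₀}^t exp(∫_s^t a) b(s) ds`. -/
theorem gronwall_power_inequality
    (t₀ T : ℝ) (hT : 0 < T)
    (a b : ℝ → ℝ)
    (ha : IntegrableOn a (Icc t₀ (t₀ + T)))
    (hb : IntegrableOn b (Icc t₀ (t₀ + T)))
    (hb_nonneg : ∀ᵐ t ∂(volume.restrict (Icc t₀ (t₀ + T))), 0 ≤ b t)
    (α : ℝ) (hα0 : 0 ≤ α) (hα1 : α < 1)
    (w w' : ℝ → ℝ)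
    (hw_nonneg : ∀ t ∈ Icc t₀ (t₀ + T), 0 ≤ w t)
    (hw'_int : IntegrableOn w' (Icc t₀ (t₀ + T)))
    (hw_AC : ∀ t ∈ Icc t₀ (t₀ + T), w t = w t₀ + ∫ s in t₀..t, w' s)
    (hw_deriv : ∀ᵐ t ∂(volume.restrict (Icc t₀ (t₀ + T))), HasDerivAt w (w' t) t)
    (hineq : ∀ᵐ t ∂(volume.restrict (Icc t₀ (t₀ + T))),
      (1 - α) * w' t ≤ a t * w t + b t * w t ^ α) :
    ∀ t ∈ Icc t₀ (t₀ + T),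
      w t ^ (1 - α) ≤ w t₀ ^ (1 - α) * Real.exp (∫ τ in t₀..t, a τ) +
        ∫ s in t₀..t, Real.exp (∫ τ in s..t, a τ) * b s :=
  gronwall_power_inequality_general t₀ T a b ha hb hb_nonneg α hα0 hα1 w w' hw_nonneg hw'_int hw_AC
    hw_deriv hineq
end

section
/- Let H be a real Hilbert space, C ⊆ H a nonempty closed set, and r > 0. Then C is r-prox-regular if and only if the limiting normal cone is hypomonotone with constant 1/r on the ball of radius r: for all x, x′ ∈ C and all ξ ∈ N^L(C,x), ξ′ ∈ N^L(C,x′) with ‖ξ‖ ≤ r and ‖ξ′‖ ≤ r, one has ⟨ξ − ξ′, x − x′⟩ ≥ −‖x − x′‖². -/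
set_option linter.unusedSectionVars false
set_option linter.unusedVariables false
set_option maxHeartbeats 1000000

open Set Filter Metric MeasureTheory Topology
open scoped RealInnerProductSpace NNReal

variable {H : Type*} [NormedAddCommGroup H] [InnerProductSpace ℝ H] [CompleteSpace H]

/-- The proximal normal cone of a set `C` at a point `x`:
`ξ ∈ N^P(C,x)` iff there exist `σ > 0`, `δ > 0` with
`⟪ξ, y - x⟫ ≤ δ ‖y - x‖²` for all `y ∈ C` with `‖y - x‖ ≤ σ`. -/
def proxNormalCone (C : Set H) (x : H) : Set H :=
  {ξ | ∃ σ > (0 : ℝ), ∃ δ > (0 : ℝ), ∀ y ∈ C, ‖y - x‖ ≤ σ → ⟪ξ, y - x⟫ ≤ δ * ‖y - x‖ ^ 2}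

/-- The limiting normal cone of `C` at `x`: weak sequential limits of proximal
normals at points of `C` converging strongly to `x`. -/
def limitingNormalCone (C : Set H) (x : H) : Set H :=
  {ξ | ∃ xs ξs : ℕ → H, (∀ n, xs n ∈ C) ∧ Tendsto xs atTop (nhds x) ∧
    (∀ n, ξs n ∈ proxNormalCone C (xs n)) ∧
    ∀ y : H, Tendsto (fun n => ⟪ξs n, y⟫) atTop (nhds ⟪ξ, y⟫)}

/-- `C` is `r`-prox-regular: every point `s` with `d(s,C) < r` has a unique
nearest point `p s` in `C`, and the nearest-point map `p` is continuous on
the enlargement `U_r(C) = {s | d(s,C) < r}`. -/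
def IsProxRegular (C : Set H) (r : ℝ) : Prop :=
  ∃ p : H → H,
    (∀ s : H, infDist s C < r →
      (p s ∈ C ∧ dist s (p s) = infDist s C) ∧
      ∀ y ∈ C, dist s y = infDist s C → y = p s) ∧
    ContinuousOn p {s : H | infDist s C < r}

namespace ProxAux

lemma nearest_halfsq {C : Set H} {u z : H} (hd : dist u z = infDist u C)
    {y : H} (hy : y ∈ C) : ⟪u - z, y - z⟫ ≤ ‖y - z‖ ^ 2 / 2 := by
  have h1 : ‖u - z‖ ≤ ‖u - y‖ := by
    rw [← dist_eq_norm, ← dist_eq_norm, hd]; exact infDist_le_dist_of_mem hy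
  have e : ‖u - y‖ ^ 2 = ‖u - z‖ ^ 2 - 2 * ⟪u - z, y - z⟫ + ‖y - z‖ ^ 2 := by
    have h2 : u - y = (u - z) - (y - z) := by abel
    rw [h2, norm_sub_sq_real]
  nlinarith [norm_nonneg (u - z), norm_nonneg (u - y)]

lemma smul_nearest_mem_prox {C : Set H} {u z : H} (hd : dist u z = infDist u C)
    {c : ℝ} (hc : 0 ≤ c) : c • (u - z) ∈ proxNormalCone C z := by
  refine ⟨1, one_pos, c / 2 + 1, by positivity, fun y hy _ => ?_⟩
  have h1 := nearest_halfsq hd hy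
  have h2 : ⟪c • (u - z), y - z⟫ = c * ⟪u - z, y - z⟫ := real_inner_smul_left _ _ _
  nlinarith [sq_nonneg ‖y - z‖, mul_le_mul_of_nonneg_left h1 hc]

lemma prox_subset_limiting {C : Set H} {x : H} (hx : x ∈ C) :
    proxNormalCone C x ⊆ limitingNormalCone C x := fun ξ hξ =>
  ⟨fun _ => x, fun _ => ξ, fun _ => hx, tendsto_const_nhds, fun _ => hξ,
    fun _ => tendsto_const_nhds⟩



lemma le_infDist' {s : Set H} (hs : s.Nonempty) {x : H} {b : ℝ}
    (h : ∀ y ∈ s, b ≤ dist x y) : b ≤ infDist x s := by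
  by_contra hlt
  push_neg at hlt
  obtain ⟨y, hy, hd⟩ := (infDist_lt_iff hs).mp hlt
  exact absurd (h y hy) (not_le.mpr hd)

lemma sq_infDist_ge {s : Set H} (hs : s.Nonempty) {c : H} {X : ℝ}
    (h : ∀ y ∈ s, X ≤ dist c y ^ 2) : X ≤ infDist c s ^ 2 := by
  have h1 : Real.sqrt (max X 0) ≤ infDist c s := by
    refine le_infDist' hs fun y hy => ?_
    have hm : max X 0 ≤ dist c y ^ 2 := max_le (h y hy) (sq_nonneg _)
    calc Real.sqrt (max X 0) ≤ Real.sqrt (dist c y ^ 2) := Real.sqrt_le_sqrt hm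
    _ = dist c y := by rw [Real.sqrt_sq dist_nonneg]
  have h2 : max X 0 ≤ infDist c s ^ 2 := by
    have := pow_le_pow_left₀ (Real.sqrt_nonneg _) h1 2
    rwa [Real.sq_sqrt (le_max_right X 0)] at this
  exact le_trans (le_max_left X 0) h2

lemma exists_near_sq {s : Set H} (hs : s.Nonempty) (c : H) {γ : ℝ} (hγ : 0 < γ) :
    ∃ z ∈ s, dist c z ^ 2 ≤ infDist c s ^ 2 + γ := by
  set d := infDist c s with hd
  have hd0 : 0 ≤ d := infDist_nonneg
  have hε : 0 < min 1 (γ / (2 * d + 1)) := lt_min one_pos (by positivity)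
  obtain ⟨z, hz, hdz⟩ := (infDist_lt_iff hs).mp
    (show infDist c s < d + min 1 (γ / (2 * d + 1)) by linarith)
  refine ⟨z, hz, ?_⟩
  have h1 : dist c z ≤ d + min 1 (γ / (2 * d + 1)) := le_of_lt hdz
  have h2 : min 1 (γ / (2 * d + 1)) ≤ 1 := min_le_left _ _
  have h3 : min 1 (γ / (2 * d + 1)) ≤ γ / (2 * d + 1) := min_le_right _ _
  have h4 : (γ / (2 * d + 1)) * (2 * d + 1) = γ := by field_simp
  nlinarith [dist_nonneg (x := c) (y := z), hε]

lemma le_of_sq_le_sq {a b : ℝ} (hb : 0 ≤ b) (h : a ^ 2 ≤ b ^ 2) (ha : 0 ≤ a) : a ≤ b := by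
  nlinarith

lemma dense_prox {C : Set H} (hC : IsClosed C) (hCne : C.Nonempty) (w : H) {η : ℝ}
    (hη : 0 < η) : ∃ c z : H, z ∈ C ∧ dist c z = infDist c C ∧ dist c w ≤ η := by
  classical
  set B : ℝ := infDist w C + 2 with hB
  have hiw : (0:ℝ) ≤ infDist w C := infDist_nonneg
  have hB0 : 0 < B := by linarith
  set b0 : ℝ := min (1/2) (η / (4 * B)) with hb0def
  have hb0 : 0 < b0 := lt_min (by norm_num) (by positivity)
  have hb0le : b0 ≤ 1/2 := min_le_left _ _
  set β : ℕ → ℝ := fun k => b0 * (1/2) ^ k with hβ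
  set γ : ℕ → ℝ := fun k => β k * (1/4) ^ k * (1/8) with hγ
  have hβpos : ∀ k, 0 < β k := fun k => by positivity
  have hβle : ∀ k, β k ≤ 1/2 := fun k => by
    have h1 : (1/2:ℝ) ^ k ≤ 1 := pow_le_one₀ (by norm_num) (by norm_num)
    have := hβpos k
    calc β k = b0 * (1/2)^k := rfl
    _ ≤ b0 * 1 := by nlinarith
    _ ≤ 1/2 := by linarith
  have hγpos : ∀ k, 0 < γ k := fun k => by positivity
  have hγmono : ∀ k, γ (k+1) ≤ γ k := fun k => by
    simp only [hγ, hβ]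
    have h1 : (0:ℝ) < (1/2)^k := by positivity
    have h2 : (0:ℝ) < (1/4)^k := by positivity
    rw [pow_succ, pow_succ]
    nlinarith [hb0, mul_pos (mul_pos hb0 h1) h2]
  have hγle : ∀ k, γ k ≤ (1/4)^k * (1/16) := fun k => by
    have h1 : β k ≤ 1/2 := hβle k
    have h2 : (0:ℝ) < (1/4)^k := by positivity
    simp only [hγ]
    nlinarith [hβpos k]
  have hsqγ : ∀ k, Real.sqrt (γ k) ≤ (1/2)^k * (1/2) := fun k => by
    have h1 : γ k ≤ ((1/2)^k * (1/2))^2 := by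
      have := hγle k
      have h2 : ((1/2:ℝ)^k)^2 = (1/4)^k := by
        rw [pow_two, ← mul_pow]; norm_num
      nlinarith [pow_pos (show (0:ℝ) < 1/4 by norm_num) k]
    calc Real.sqrt (γ k) ≤ Real.sqrt (((1/2)^k * (1/2))^2) := Real.sqrt_le_sqrt h1
    _ = (1/2)^k * (1/2) := Real.sqrt_sq (by positivity)
  -- the one-step construction
  have step : ∀ k : ℕ, ∀ c z : H, ∃ q : H × H,
      (z ∈ C ∧ dist c z ^ 2 ≤ infDist c C ^ 2 + γ k) →
      (q.2 ∈ C ∧ dist q.1 q.2 ^ 2 ≤ infDist q.1 C ^ 2 + γ (k+1) ∧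
        dist q.1 c = β k * dist c z ∧
        dist q.2 z ^ 2 * β k ≤ γ (k+1) + γ k ∧
        dist q.1 q.2 ≤ dist c z + Real.sqrt (γ (k+1))) := by
    intro k c z
    by_cases hcase : z ∈ C ∧ dist c z ^ 2 ≤ infDist c C ^ 2 + γ k
    swap
    · exact ⟨(c, z), fun hh => absurd hh hcase⟩
    obtain ⟨hz, hinv⟩ := hcase
    set D := dist c z with hD
    set c' := z + (1 - β k) • (c - z) with hc'
    have hβk := hβpos k; have hβk2 := hβle k
    have hkey : ∀ y ∈ C,
        (1 - β k)^2 * D^2 - (1 - β k) * γ k + β k * dist z y ^ 2 ≤ dist c' y ^ 2 := by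
      intro y hy
      have e1 : c' - y = (1 - β k) • (c - z) - (y - z) := by
        simp only [hc']; abel
      have e2 : dist c' y ^ 2 = (1-β k)^2 * D^2 - 2 * (1 - β k) * ⟪c - z, y - z⟫
          + ‖y - z‖^2 := by
        rw [dist_eq_norm, e1, norm_sub_sq_real, norm_smul, real_inner_smul_left]
        simp only [Real.norm_eq_abs, abs_of_nonneg (by linarith : (0:ℝ) ≤ 1 - β k)]
        rw [hD, dist_eq_norm]
        ring
      have e3 : dist c y ^ 2 = D^2 - 2 * ⟪c - z, y - z⟫ + ‖y - z‖^2 := by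
        have : c - y = (c - z) - (y - z) := by abel
        rw [dist_eq_norm, this, norm_sub_sq_real, hD, dist_eq_norm]
      have e4 : infDist c C ^ 2 ≤ dist c y ^ 2 := by
        have h5 : infDist c C ≤ dist c y := infDist_le_dist_of_mem hy
        exact pow_le_pow_left₀ infDist_nonneg h5 2
      have e5 : dist z y = ‖y - z‖ := by rw [dist_eq_norm, norm_sub_rev]
      rw [e2, e5]
      nlinarith [hinv]
    have hinf' : (1 - β k)^2 * D^2 - (1 - β k) * γ k ≤ infDist c' C ^ 2 := by
      refine sq_infDist_ge ⟨z, hz⟩ fun y hy => ?_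
      have := hkey y hy
      nlinarith [sq_nonneg (dist z y), hβk]
    obtain ⟨z', hz', hz'sq⟩ := exists_near_sq hCne c' (hγpos (k+1))
    have hdist_c'z : dist c' z = (1 - β k) * D := by
      have e1 : c' - z = (1 - β k) • (c - z) := by simp only [hc']; abel
      rw [dist_eq_norm, e1, norm_smul, Real.norm_eq_abs,
        abs_of_nonneg (by linarith : (0:ℝ) ≤ 1 - β k), hD, dist_eq_norm]
    have con1 : dist c' c = β k * dist c z := by
      have e1 : c' - c = (-β k) • (c - z) := by
        simp only [hc']; rw [sub_smul, one_smul, neg_smul]; abel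
      rw [dist_eq_norm, e1, norm_smul, Real.norm_eq_abs, abs_neg,
        abs_of_nonneg (le_of_lt hβk), dist_eq_norm]
    have con2 : dist z' z ^ 2 * β k ≤ γ (k+1) + γ k := by
      have h6 : infDist c' C ≤ dist c' z := infDist_le_dist_of_mem hz
      have h7 : infDist c' C ^ 2 ≤ ((1 - β k) * D)^2 := by
        rw [← hdist_c'z]; exact pow_le_pow_left₀ infDist_nonneg h6 2
      have h8 := hkey z' hz'
      rw [dist_comm z' z]
      linarith [h8, hz'sq, h7, mul_pos hβk (hγpos k)]
    have con3 : dist c' z' ≤ dist c z + Real.sqrt (γ (k+1)) := by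
      have h7 : dist c' z' ^ 2 ≤ ((1 - β k) * D)^2 + γ (k+1) := by
        have h6 : infDist c' C ≤ dist c' z := infDist_le_dist_of_mem hz
        have h7a := pow_le_pow_left₀ infDist_nonneg h6 2
        rw [hdist_c'z] at h7a
        linarith [hz'sq]
      have h8 : ((1-β k)*D)^2 + γ (k+1) ≤ (D + Real.sqrt (γ (k+1)))^2 := by
        have hs : Real.sqrt (γ (k+1)) ^ 2 = γ (k+1) := Real.sq_sqrt (le_of_lt (hγpos (k+1)))
        have hD0 : 0 ≤ D := dist_nonneg
        have hs0 : 0 ≤ Real.sqrt (γ (k+1)) := Real.sqrt_nonneg _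
        nlinarith [hβk, hβk2, mul_nonneg hD0 hs0,
          mul_nonneg (le_of_lt hβk) (mul_nonneg hD0 hD0)]
      exact le_of_sq_le_sq (by positivity) (le_trans h7 h8) dist_nonneg
    exact ⟨(c', z'), fun _ => ⟨hz', hz'sq, con1, con2, con3⟩⟩
  choose f hf using step
  obtain ⟨z0, hz0, hz0sq⟩ := exists_near_sq hCne w (hγpos 0)
  have hseqex : ∃ seq : ℕ → H × H, seq 0 = (w, z0) ∧
      ∀ k, seq (k+1) = f k (seq k).1 (seq k).2 :=
    ⟨fun k => Nat.rec (w, z0) (fun k p => f k p.1 p.2) k, rfl, fun _ => rfl⟩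
  obtain ⟨seq, hseq0, hseqS⟩ := hseqex
  have e01 : (seq 0).1 = w := by rw [hseq0]
  have e02 : (seq 0).2 = z0 := by rw [hseq0]
  have hinv : ∀ k, (seq k).2 ∈ C ∧
      dist (seq k).1 (seq k).2 ^ 2 ≤ infDist (seq k).1 C ^ 2 + γ k := by
    intro k; induction k with
    | zero => rw [hseq0]; exact ⟨hz0, hz0sq⟩
    | succ k ih =>
      have := hf k (seq k).1 (seq k).2 ⟨ih.1, ih.2⟩
      rw [hseqS]
      exact ⟨this.1, this.2.1⟩
  have hstep : ∀ k, dist (seq (k+1)).1 (seq k).1 = β k * dist (seq k).1 (seq k).2 ∧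
      dist (seq (k+1)).2 (seq k).2 ^ 2 * β k ≤ γ (k+1) + γ k ∧
      dist (seq (k+1)).1 (seq (k+1)).2 ≤ dist (seq k).1 (seq k).2 + Real.sqrt (γ (k+1)) := by
    intro k
    have := hf k (seq k).1 (seq k).2 ⟨(hinv k).1, (hinv k).2⟩
    rw [hseqS]
    exact ⟨this.2.2.1, this.2.2.2.1, this.2.2.2.2⟩
  -- bound on D k
  have hD0 : dist (seq 0).1 (seq 0).2 ≤ infDist w C + 1 := by
    have h1 : dist w z0 ^ 2 ≤ infDist w C ^2 + 1 := by
      have := hγle 0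
      have := hz0sq
      simp only [pow_zero, one_mul] at *
      nlinarith [hγpos 0]
    rw [e01, e02]
    refine le_of_sq_le_sq (by linarith) ?_ dist_nonneg
    nlinarith [hiw]
  have hDk : ∀ k, dist (seq k).1 (seq k).2 ≤ infDist w C + 2 - (1/2)^k := by
    intro k; induction k with
    | zero => norm_num; linarith [hD0]
    | succ k ih =>
      have h1 := (hstep k).2.2
      have h2 := hsqγ (k+1)
      have h3 : ((1:ℝ)/2)^(k+1) * (1/2) ≤ (1/2)^k - (1/2)^(k+1) := by
        rw [pow_succ]; ring_nf; nlinarith [pow_pos (show (0:ℝ) < 1/2 by norm_num) k]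
      calc dist (seq (k+1)).1 (seq (k+1)).2
          ≤ dist (seq k).1 (seq k).2 + Real.sqrt (γ (k+1)) := h1
        _ ≤ (infDist w C + 2 - (1/2)^k) + (1/2)^(k+1) * (1/2) := by linarith
        _ ≤ infDist w C + 2 - (1/2)^(k+1) := by linarith
  have hDB : ∀ k, dist (seq k).1 (seq k).2 ≤ B := fun k => by
    have := hDk k
    have : (0:ℝ) < (1/2)^k := by positivity
    simp only [hB]; linarith [hDk k]
  -- center movement
  have hcmove : ∀ k, dist (seq (k+1)).1 (seq k).1 ≤ (b0 * B) * (1/2)^k := fun k => by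
    have h1 := (hstep k).1
    have h2 := hDB k
    have h3 : (0:ℝ) < (1/2)^k := by positivity
    rw [h1]
    simp only [hβ]
    have h4 := mul_le_mul_of_nonneg_left h2 (le_of_lt (mul_pos hb0 h3))
    nlinarith [h4]
  have hcw : ∀ k, dist (seq k).1 w ≤ 2 * b0 * B * (1 - (1/2)^k) := by
    intro k; induction k with
    | zero => rw [e01]; simp
    | succ k ih =>
      have h1 := hcmove k
      have h3 : (0:ℝ) < (1/2)^k := by positivity
      calc dist (seq (k+1)).1 w ≤ dist (seq (k+1)).1 (seq k).1 + dist (seq k).1 w :=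
            dist_triangle _ _ _
        _ ≤ (b0 * B) * (1/2)^k + 2 * b0 * B * (1 - (1/2)^k) := by linarith
        _ = 2 * b0 * B * (1 - (1/2)^(k+1)) := by rw [pow_succ]; ring
  have hcwη : ∀ k, dist (seq k).1 w ≤ η / 2 := fun k => by
    have h1 := hcw k
    have h2 : b0 ≤ η / (4 * B) := min_le_right _ _
    have h3 : (0:ℝ) < (1/2)^k := by positivity
    have h4 : 2 * b0 * B * (1 - (1/2)^k) ≤ 2 * b0 * B := by
      nlinarith [mul_pos (mul_pos hb0 hB0) h3]
    have h5 : 2 * (η / (4*B)) * B = η / 2 := by field_simp; ring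
    have h6 := mul_le_mul_of_nonneg_left h2 (by positivity : (0:ℝ) ≤ 2 * B)
    nlinarith [h6]
  -- witness movement
  have hzmove : ∀ k, dist (seq (k+1)).2 (seq k).2 ≤ (1/2) * (1/2)^k := fun k => by
    have h1 := (hstep k).2.1
    have h2 : dist (seq (k+1)).2 (seq k).2 ^ 2 ≤ (γ (k+1) + γ k) / β k := by
      rw [le_div_iff₀ (hβpos k)]; linarith
    have h3 : (γ (k+1) + γ k) / β k ≤ ((1/2) * (1/2)^k)^2 := by
      rw [div_le_iff₀ (hβpos k)]
      have h4 := hγmono k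
      have h5 : γ k = β k * (1/4)^k * (1/8) := rfl
      have h6 : ((1/2:ℝ) * (1/2)^k)^2 = (1/4)^k * (1/4) := by
        have h6a : ((1/2:ℝ)^k)^2 = (1/4)^k := by rw [pow_two, ← mul_pow]; norm_num
        rw [mul_pow, h6a]; ring
      have h7 : (0:ℝ) < (1/4)^k := by positivity
      nlinarith [hβpos k]
    exact le_of_sq_le_sq (by positivity) (le_trans h2 h3) dist_nonneg
  -- Cauchy sequences
  have hcauchy_c : CauchySeq (fun k => (seq k).1) := by
    refine cauchySeq_of_le_geometric (1/2) (b0 * B) (by norm_num) fun n => ?_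
    rw [dist_comm]; exact hcmove n
  have hcauchy_z : CauchySeq (fun k => (seq k).2) := by
    refine cauchySeq_of_le_geometric (1/2) (1/2) (by norm_num) fun n => ?_
    rw [dist_comm]; exact hzmove n
  obtain ⟨cl, hcl⟩ := cauchySeq_tendsto_of_complete hcauchy_c
  obtain ⟨zl, hzl⟩ := cauchySeq_tendsto_of_complete hcauchy_z
  have hzlC : zl ∈ C := hC.mem_of_tendsto hzl (Eventually.of_forall fun k => (hinv k).1)
  refine ⟨cl, zl, hzlC, ?_, ?_⟩
  · have hle : infDist cl C ≤ dist cl zl := infDist_le_dist_of_mem hzlC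
    have hge : dist cl zl ^ 2 ≤ infDist cl C ^ 2 := by
      have t1 : Tendsto (fun k => dist (seq k).1 (seq k).2 ^ 2) atTop
          (𝓝 (dist cl zl ^ 2)) := ((hcl.dist hzl).pow 2)
      have t2 : Tendsto (fun k => infDist (seq k).1 C ^ 2 + γ k) atTop
          (𝓝 (infDist cl C ^ 2 + 0)) := by
        refine Tendsto.add ?_ ?_
        · exact ((((continuous_infDist_pt C).tendsto cl).comp hcl).pow 2)
        · have hub : ∀ k, γ k ≤ (1/4)^k * (1/16) := hγle
          have hlb : ∀ k, (0:ℝ) ≤ γ k := fun k => le_of_lt (hγpos k)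
          have t3 : Tendsto (fun k : ℕ => ((1:ℝ)/4)^k * (1/16)) atTop (𝓝 0) := by
            have := tendsto_pow_atTop_nhds_zero_of_lt_one
              (show (0:ℝ) ≤ 1/4 by norm_num) (show (1:ℝ)/4 < 1 by norm_num)
            simpa using this.mul_const (1/16 : ℝ)
          exact squeeze_zero hlb hub t3
      rw [add_zero] at t2
      exact le_of_tendsto_of_tendsto' t1 t2 fun k => (hinv k).2
    have := le_of_sq_le_sq infDist_nonneg hge dist_nonneg
    exact le_antisymm this hle
  · have t1 : Tendsto (fun k => dist (seq k).1 w) atTop (𝓝 (dist cl w)) :=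
      hcl.dist tendsto_const_nhds
    have := le_of_tendsto t1 (Eventually.of_forall hcwη)
    linarith


section Reverse

variable {C : Set H} {r : ℝ}

/-- The hypomonotonicity hypothesis. -/
def Hypo (C : Set H) (r : ℝ) : Prop :=
  ∀ x ∈ C, ∀ x' ∈ C, ∀ ξ ∈ limitingNormalCone C x, ∀ ξ' ∈ limitingNormalCone C x',
    ‖ξ‖ ≤ r → ‖ξ'‖ ≤ r → ⟪ξ - ξ', x - x'⟫ ≥ -‖x - x'‖ ^ 2

lemma abs_infDist_sub_le {s : Set H} (u u' : H) :
    |infDist u s - infDist u' s| ≤ dist u u' := by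
  rw [abs_sub_le_iff]
  constructor
  · linarith [infDist_le_infDist_add_dist (x := u) (y := u') (s := s)]
  · linarith [infDist_le_infDist_add_dist (x := u') (y := u) (s := s),
      dist_comm u u']

lemma proj_dist_est (hr : 0 < r) (hyp : Hypo C r) {u u' z z' : H}
    (hz : z ∈ C) (hz' : z' ∈ C)
    (hd : dist u z = infDist u C) (hd' : dist u' z' = infDist u' C) :
    (1 - dist u z / r) * dist z z' ≤ 2 * dist u u' := by
  classical
  set d1 := dist u z with hd1
  set d2 := dist u' z' with hd2
  have hd1n : 0 ≤ d1 := dist_nonneg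
  have hd2n : 0 ≤ d2 := dist_nonneg
  -- scaled normals
  set ξ : H := if d1 = 0 then 0 else (r / d1) • (u - z) with hξdef
  set ξ' : H := if d2 = 0 then 0 else (r / d2) • (u' - z') with hξ'def
  have hmem : ξ ∈ limitingNormalCone C z := by
    refine prox_subset_limiting hz ?_
    by_cases h : d1 = 0
    · simp only [hξdef, if_pos h]
      have : (0:H) = (0:ℝ) • (u - z) := by simp
      rw [this]
      exact smul_nearest_mem_prox hd le_rfl
    · simp only [hξdef, if_neg h]
      exact smul_nearest_mem_prox hd (by positivity : (0:ℝ) ≤ r / d1)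
  have hmem' : ξ' ∈ limitingNormalCone C z' := by
    refine prox_subset_limiting hz' ?_
    by_cases h : d2 = 0
    · simp only [hξ'def, if_pos h]
      have : (0:H) = (0:ℝ) • (u' - z') := by simp
      rw [this]
      exact smul_nearest_mem_prox hd' le_rfl
    · simp only [hξ'def, if_neg h]
      exact smul_nearest_mem_prox hd' (by positivity : (0:ℝ) ≤ r / d2)
  have hnξ : ‖ξ‖ ≤ r := by
    by_cases h : d1 = 0
    · simp [hξdef, if_pos h, le_of_lt hr]
    · have h1 : 0 < d1 := lt_of_le_of_ne hd1n (Ne.symm h)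
      have : ‖ξ‖ = (r / d1) * d1 := by
        rw [hξdef, if_neg h, norm_smul, Real.norm_eq_abs,
          abs_of_nonneg (by positivity : (0:ℝ) ≤ r / d1), ← dist_eq_norm]
      rw [this, div_mul_cancel₀ _ (ne_of_gt h1)]
  have hnξ' : ‖ξ'‖ ≤ r := by
    by_cases h : d2 = 0
    · simp [hξ'def, if_pos h, le_of_lt hr]
    · have h1 : 0 < d2 := lt_of_le_of_ne hd2n (Ne.symm h)
      have : ‖ξ'‖ = (r / d2) * d2 := by
        rw [hξ'def, if_neg h, norm_smul, Real.norm_eq_abs,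
          abs_of_nonneg (by positivity : (0:ℝ) ≤ r / d2), ← dist_eq_norm]
      rw [this, div_mul_cancel₀ _ (ne_of_gt h1)]
  have hrep : (d1 / r) • ξ = u - z := by
    by_cases h : d1 = 0
    · have : u = z := by rw [← dist_eq_zero, ← hd1, h]
      simp [hξdef, if_pos h, this]
    · rw [hξdef, if_neg h, smul_smul, div_mul_div_comm,
        mul_comm d1 r, div_self (by positivity : r * d1 ≠ 0), one_smul]
  have hrep' : (d2 / r) • ξ' = u' - z' := by
    by_cases h : d2 = 0
    · have : u' = z' := by rw [← dist_eq_zero, ← hd2, h]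
      simp [hξ'def, if_pos h, this]
    · rw [hξ'def, if_neg h, smul_smul, div_mul_div_comm,
        mul_comm d2 r, div_self (by positivity : r * d2 ≠ 0), one_smul]
  have key : ⟪ξ - ξ', z - z'⟫ ≥ -‖z - z'‖ ^ 2 := hyp z hz z' hz' ξ hmem ξ' hmem' hnξ hnξ'
  set Δ := z - z' with hΔ
  have iden : (Δ : H) = (u - u') - ((u - z) - (u' - z')) := by rw [hΔ]; abel
  have i1 : ⟪Δ, (u - z) - (u' - z')⟫
      = (d1 / r) * ⟪Δ, ξ - ξ'⟫ + ((d1 - d2) / r) * ⟪Δ, ξ'⟫ := by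
    rw [← hrep, ← hrep']
    rw [inner_sub_right, real_inner_smul_right, real_inner_smul_right,
      inner_sub_right]
    ring
  have i2 : ⟪Δ, ξ - ξ'⟫ ≥ -‖Δ‖ ^ 2 := by
    rw [real_inner_comm]; exact key
  have i3 : |⟪Δ, ξ'⟫| ≤ ‖Δ‖ * r := by
    calc |⟪Δ, ξ'⟫| ≤ ‖Δ‖ * ‖ξ'‖ := abs_real_inner_le_norm _ _
    _ ≤ ‖Δ‖ * r := by
      have := norm_nonneg Δ
      nlinarith
  have i4 : |d1 - d2| ≤ dist u u' := by
    rw [hd, hd']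
    exact abs_infDist_sub_le u u'
  have i5 : ⟪Δ, u - u'⟫ ≤ ‖Δ‖ * dist u u' := by
    calc ⟪Δ, u - u'⟫ ≤ ‖Δ‖ * ‖u - u'‖ := real_inner_le_norm _ _
    _ = ‖Δ‖ * dist u u' := by rw [dist_eq_norm]
  have i6 : ‖Δ‖ ^ 2 = ⟪Δ, u - u'⟫ - ⟪Δ, (u - z) - (u' - z')⟫ := by
    have h7 : ⟪Δ, Δ⟫ = ‖Δ‖ ^ 2 := real_inner_self_eq_norm_sq Δ
    calc ‖Δ‖ ^ 2 = ⟪Δ, Δ⟫ := h7.symm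
    _ = ⟪Δ, (u - u') - ((u - z) - (u' - z'))⟫ := by rw [← iden]
    _ = ⟪Δ, u - u'⟫ - ⟪Δ, (u - z) - (u' - z')⟫ := inner_sub_right _ _ _
  have i7 : -(dist u u' * ‖Δ‖) ≤ ((d1 - d2) / r) * ⟪Δ, ξ'⟫ := by
    have hb : |(d1 - d2) * ⟪Δ, ξ'⟫| ≤ dist u u' * (‖Δ‖ * r) := by
      rw [abs_mul]
      have h2 := mul_le_mul i4 i3 (abs_nonneg _) dist_nonneg
      linarith
    have h2 : |((d1 - d2) / r) * ⟪Δ, ξ'⟫| ≤ dist u u' * ‖Δ‖ := by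
      rw [div_mul_eq_mul_div, abs_div, abs_of_nonneg (le_of_lt hr),
        div_le_iff₀ hr]
      calc |(d1 - d2) * ⟪Δ, ξ'⟫| ≤ dist u u' * (‖Δ‖ * r) := hb
      _ = dist u u' * ‖Δ‖ * r := by ring
    linarith [neg_abs_le (((d1 - d2) / r) * ⟪Δ, ξ'⟫)]
  have i8 : -((d1 / r) * ‖Δ‖ ^ 2) ≤ (d1 / r) * ⟪Δ, ξ - ξ'⟫ := by
    have h9 : 0 ≤ d1 / r := by positivity
    nlinarith [i2]
  have main : ‖Δ‖ ^ 2 ≤ ‖Δ‖ * dist u u' + (d1 / r) * ‖Δ‖ ^ 2 + dist u u' * ‖Δ‖ := by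
    linarith [i5, i7, i8, i6, i1]
  have hzz : dist z z' = ‖Δ‖ := by rw [hΔ, dist_eq_norm]
  rw [hzz]
  rcases eq_or_lt_of_le (norm_nonneg Δ) with h0 | h0
  · rw [← h0, mul_zero]
    positivity
  · have main2 : (1 - d1 / r) * ‖Δ‖ * ‖Δ‖ ≤ (2 * dist u u') * ‖Δ‖ := by nlinarith [main]
    exact le_of_mul_le_mul_right main2 h0

lemma unique_nearest (hr : 0 < r) (hyp : Hypo C r) {u z z' : H}
    (hz : z ∈ C) (hz' : z' ∈ C)
    (hd : dist u z = infDist u C) (hd' : dist u z' = infDist u C)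
    (hu : infDist u C < r) : z = z' := by
  have h1 := proj_dist_est hr hyp hz hz' hd hd'
  simp only [dist_self, mul_zero] at h1
  have h2 : 0 < 1 - dist u z / r := by
    rw [hd]
    have : infDist u C / r < 1 := (div_lt_one hr).mpr hu
    linarith
  have h3 : dist z z' ≤ 0 := by
    by_contra h4
    push_neg at h4
    nlinarith [h1, mul_pos h2 h4]
  exact dist_le_zero.mp h3

lemma exists_nearest (hC : IsClosed C) (hCne : C.Nonempty) (hr : 0 < r)
    (hyp : Hypo C r) {u : H} (hu : infDist u C < r) :
    ∃ z ∈ C, dist u z = infDist u C := by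
  classical
  set d := infDist u C with hdd
  have hd0 : 0 ≤ d := infDist_nonneg
  rcases eq_or_lt_of_le hd0 with h0 | h0
  · have : u ∈ C := (hC.mem_iff_infDist_zero hCne).mpr h0.symm
    exact ⟨u, this, by simp [← hdd, ← h0]⟩
  set A := min (d/2) ((r - d)/4) with hA
  have hApos : 0 < A := lt_min (by linarith) (by linarith)
  set η : ℕ → ℝ := fun n => A / (n + 1) with hη
  have hηpos : ∀ n, 0 < η n := fun n => by positivity
  have hηle : ∀ n, η n ≤ A := fun n => by
    rw [hη]
    rw [div_le_iff₀ (by positivity : (0:ℝ) < (n:ℝ) + 1)]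
    nlinarith [hApos, Nat.cast_nonneg (α := ℝ) n]
  have hstep : ∀ n : ℕ, ∃ c z : H, z ∈ C ∧ dist c z = infDist c C ∧ dist c u ≤ η n :=
    fun n => dense_prox hC hCne u (hηpos n)
  choose cs zs hzsC hzsd hcu using hstep
  have hdn : ∀ n, |infDist (cs n) C - d| ≤ η n := fun n => by
    rw [hdd]
    exact le_trans (abs_infDist_sub_le (cs n) u) (hcu n)
  have hdn2 : ∀ n, dist (cs n) (zs n) ≤ d + (r - d)/4 := fun n => by
    have h1 := hdn n
    have h2 : η n ≤ (r - d)/4 := le_trans (hηle n) (min_le_right _ _)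
    rw [hzsd n]
    rw [abs_le] at h1
    linarith [h1.2]
  set κ := 3 * (r - d) / (4 * r) with hκ
  have hκpos : 0 < κ := by
    rw [hκ]; exact div_pos (by linarith) (by linarith)
  have hκle : ∀ n, κ ≤ 1 - dist (cs n) (zs n) / r := fun n => by
    have h1 := hdn2 n
    have h3 : κ = 1 - (d + (r - d)/4)/r := by rw [hκ]; field_simp; ring
    rw [h3]
    have h4 : dist (cs n) (zs n) / r ≤ (d + (r - d)/4)/r := by gcongr
    linarith
  have key : ∀ m n, κ * dist (zs m) (zs n) ≤ 2 * (η m + η n) := by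
    intro m n
    have h5 := proj_dist_est hr hyp (hzsC m) (hzsC n) (hzsd m) (hzsd n)
    have h6 : dist (cs m) (cs n) ≤ η m + η n := by
      calc dist (cs m) (cs n) ≤ dist (cs m) u + dist u (cs n) := dist_triangle _ _ _
      _ ≤ η m + η n := by
          have h7 := hcu m; have h8 := hcu n
          rw [dist_comm u (cs n)]; linarith
    have h8 := hκle m
    nlinarith [dist_nonneg (x := zs m) (y := zs n), h5]
  have hCauchy : CauchySeq zs := by
    rw [Metric.cauchySeq_iff]
    intro ε hε
    obtain ⟨N, hN⟩ := exists_nat_gt (4 * A / (κ * ε))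
    have hNpos : (0:ℝ) < (N:ℝ) + 1 := by positivity
    refine ⟨N, fun m hm n hn => ?_⟩
    have hle : ∀ {k : ℕ}, N ≤ k → η k * ((N:ℝ) + 1) ≤ A := by
      intro k hk
      have hc : ((N:ℝ) + 1) ≤ ((k:ℝ) + 1) := by exact_mod_cast Nat.succ_le_succ hk
      rw [hη, div_mul_eq_mul_div, div_le_iff₀ (by positivity : (0:ℝ) < (k:ℝ) + 1)]
      nlinarith [hApos]
    have e1 : κ * dist (zs m) (zs n) * ((N:ℝ) + 1) ≤ 4 * A := by
      have h9 := mul_le_mul_of_nonneg_right (key m n) (le_of_lt hNpos)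
      have h10 := hle hm
      have h11 := hle hn
      nlinarith
    have e2 : 4 * A < κ * ε * ((N:ℝ) + 1) := by
      have h12 : 4 * A < (N:ℝ) * (κ * ε) := by
        rw [div_lt_iff₀ (by positivity : (0:ℝ) < κ * ε)] at hN
        linarith
      nlinarith [mul_pos hκpos hε]
    nlinarith [mul_pos hκpos hNpos, e1, e2]
  obtain ⟨z, hzt⟩ := cauchySeq_tendsto_of_complete hCauchy
  have hzC : z ∈ C := hC.mem_of_tendsto hzt (Eventually.of_forall hzsC)
  refine ⟨z, hzC, ?_⟩
  have hge : d ≤ dist u z := by rw [hdd]; exact infDist_le_dist_of_mem hzC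
  have hcs_tend : Tendsto cs atTop (𝓝 u) := by
    rw [tendsto_iff_dist_tendsto_zero]
    refine squeeze_zero (fun n => dist_nonneg) hcu ?_
    have h13 : Tendsto (fun n : ℕ => A * (1 / ((n:ℝ) + 1))) atTop (𝓝 (A * 0)) :=
      tendsto_one_div_add_atTop_nhds_zero_nat.const_mul A
    simp only [mul_zero] at h13
    convert h13 using 2 with n
    rw [hη]; ring
  have hzs_dist : Tendsto (fun n => dist (zs n) z) atTop (𝓝 0) :=
    tendsto_iff_dist_tendsto_zero.mp hzt
  have hinf_tend : Tendsto (fun n => dist (cs n) (zs n)) atTop (𝓝 d) := by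
    have h14 : Tendsto (fun n => infDist (cs n) C) atTop (𝓝 (infDist u C)) :=
      ((continuous_infDist_pt C).tendsto u).comp hcs_tend
    rw [← hdd] at h14
    refine h14.congr fun n => ?_
    rw [hzsd n]
  have hle2 : dist u z ≤ d := by
    have h15 : Tendsto (fun n => dist u (cs n) + dist (cs n) (zs n) + dist (zs n) z)
        atTop (𝓝 (0 + d + 0)) := by
      refine Tendsto.add (Tendsto.add ?_ hinf_tend) hzs_dist
      have := tendsto_iff_dist_tendsto_zero.mp hcs_tend
      refine this.congr fun n => dist_comm (cs n) u
    simp only [zero_add, add_zero] at h15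
    refine ge_of_tendsto h15 (Eventually.of_forall fun n => ?_)
    calc dist u z ≤ dist u (zs n) + dist (zs n) z := dist_triangle _ _ _
    _ ≤ (dist u (cs n) + dist (cs n) (zs n)) + dist (zs n) z := by
        linarith [dist_triangle u (cs n) (zs n)]
  linarith [hge, hle2]

theorem reverse_direction (hC : IsClosed C) (hCne : C.Nonempty) (hr : 0 < r)
    (hyp : Hypo C r) : IsProxRegular C r := by
  classical
  have hex : ∀ u : H, ∃ z : H, infDist u C < r → (z ∈ C ∧ dist u z = infDist u C) := by
    intro u
    by_cases h : infDist u C < r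
    · obtain ⟨z, hz, hdz⟩ := exists_nearest hC hCne hr hyp h
      exact ⟨z, fun _ => ⟨hz, hdz⟩⟩
    · exact ⟨hCne.some, fun hh => absurd hh h⟩
  choose p hp using hex
  refine ⟨p, fun s hs => ⟨⟨(hp s hs).1, (hp s hs).2⟩, fun y hy hdy => ?_⟩, ?_⟩
  · exact unique_nearest hr hyp hy (hp s hs).1 hdy (hp s hs).2 hs
  · intro s₀ hs₀
    have hd₀ : infDist s₀ C < r := hs₀
    have hκ₀ : 0 < 1 - infDist s₀ C / r := by
      have : infDist s₀ C / r < 1 := (div_lt_one hr).mpr hd₀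
      linarith
    rw [Metric.continuousWithinAt_iff]
    intro ε hε
    refine ⟨(1 - infDist s₀ C / r) * ε / 4, by positivity, fun s hs hss₀ => ?_⟩
    have h1 := proj_dist_est hr hyp (hp s₀ hs₀).1 (hp s hs).1 (hp s₀ hs₀).2 (hp s hs).2
    rw [(hp s₀ hs₀).2] at h1
    have h2 : dist (p s) (p s₀) ≤ 2 * dist s₀ s / (1 - infDist s₀ C / r) := by
      rw [le_div_iff₀ hκ₀, dist_comm (p s) (p s₀)]
      nlinarith [h1]
    have h3 : dist s₀ s < (1 - infDist s₀ C / r) * ε / 4 := by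
      rw [dist_comm s₀ s]; exact hss₀
    rw [dist_comm (p s) (p s₀)]
    nlinarith [h1, h3, hκ₀, mul_pos hκ₀ hε, dist_nonneg (x := p s₀) (y := p s)]

end Reverse

noncomputable def psiF (C : Set H) (w : H) : ℝ := ‖w‖ ^ 2 / 2 - infDist w C ^ 2 / 2

lemma psiF_ge {C : Set H} {y : H} (hy : y ∈ C) (w : H) :
    ⟪w, y⟫ - ‖y‖ ^ 2 / 2 ≤ psiF C w := by
  have h1 : infDist w C ≤ ‖w - y‖ := by
    rw [← dist_eq_norm]; exact infDist_le_dist_of_mem hy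
  have h2 : infDist w C ^ 2 ≤ ‖w - y‖ ^ 2 := pow_le_pow_left₀ infDist_nonneg h1 2
  have h3 : ‖w - y‖ ^ 2 = ‖w‖ ^ 2 - 2 * ⟪w, y⟫ + ‖y‖ ^ 2 := norm_sub_sq_real w y
  simp only [psiF]; linarith

lemma psiF_eq {C : Set H} {w z : H} (hd : dist w z = infDist w C) :
    psiF C w = ⟪w, z⟫ - ‖z‖ ^ 2 / 2 := by
  have h3 : ‖w - z‖ ^ 2 = ‖w‖ ^ 2 - 2 * ⟪w, z⟫ + ‖z‖ ^ 2 := norm_sub_sq_real w z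
  have h4 : infDist w C ^ 2 = ‖w - z‖ ^ 2 := by rw [← hd, dist_eq_norm]
  simp only [psiF]; rw [h4]; linarith

lemma psiF_lt {C : Set H} (hCne : C.Nonempty) (w : H) {ε : ℝ} (hε : 0 < ε) :
    ∃ y ∈ C, psiF C w ≤ ⟪w, y⟫ - ‖y‖ ^ 2 / 2 + ε := by
  obtain ⟨y, hy, hysq⟩ := exists_near_sq hCne w (show (0:ℝ) < 2 * ε by linarith)
  refine ⟨y, hy, ?_⟩
  have h3 : (dist w y) ^ 2 = ‖w‖ ^ 2 - 2 * ⟪w, y⟫ + ‖y‖ ^ 2 := by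
    rw [dist_eq_norm]; exact norm_sub_sq_real w y
  simp only [psiF]; linarith

lemma psiF_convex {C : Set H} (hCne : C.Nonempty) (a b : H) {θ : ℝ}
    (h0 : 0 ≤ θ) (h1 : θ ≤ 1) :
    psiF C ((1 - θ) • a + θ • b) ≤ (1 - θ) * psiF C a + θ * psiF C b := by
  by_contra hcon
  push_neg at hcon
  set ε := (psiF C ((1 - θ) • a + θ • b) - ((1 - θ) * psiF C a + θ * psiF C b)) / 2 with hε
  have hεpos : 0 < ε := by rw [hε]; linarith
  obtain ⟨y, hy, hyle⟩ := psiF_lt hCne ((1 - θ) • a + θ • b) hεpos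
  have e1 : ⟪(1 - θ) • a + θ • b, y⟫ = (1 - θ) * ⟪a, y⟫ + θ * ⟪b, y⟫ := by
    rw [inner_add_left, real_inner_smul_left, real_inner_smul_left]
  have e2 : ⟪a, y⟫ - ‖y‖ ^ 2 / 2 ≤ psiF C a := psiF_ge hy a
  have e3 : ⟪b, y⟫ - ‖y‖ ^ 2 / 2 ≤ psiF C b := psiF_ge hy b
  have e4 := mul_le_mul_of_nonneg_left e2 (by linarith : (0:ℝ) ≤ 1 - θ)
  have e5 := mul_le_mul_of_nonneg_left e3 h0
  rw [e1] at hyle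
  have : psiF C ((1 - θ) • a + θ • b) ≤ (1 - θ) * psiF C a + θ * psiF C b + ε := by
    nlinarith [e4, e5]
  rw [hε] at this
  linarith

lemma psiF_continuous (C : Set H) : Continuous fun w : H => psiF C w := by
  simp only [psiF]
  exact ((continuous_norm.pow 2).div_const 2).sub
    (((continuous_infDist_pt C).pow 2).div_const 2)

lemma psiF_min {C : Set H} (hCne : C.Nonempty) (b : H) :
    ∃ m : H, ∀ w, psiF C m + ‖m - b‖ ^ 2 / 2 ≤ psiF C w + ‖w - b‖ ^ 2 / 2 := by
  classical
  obtain ⟨x₀, hx₀⟩ := id hCne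
  set Φ : H → ℝ := fun w => psiF C w + ‖w - b‖ ^ 2 / 2 with hΦ
  have hlb : ∀ w, ⟪b, x₀⟫ - ‖x₀‖ ^ 2 ≤ Φ w := by
    intro w
    have h1 : ⟪w, x₀⟫ - ‖x₀‖ ^ 2 / 2 ≤ psiF C w := psiF_ge hx₀ w
    have h2 : ⟪w, x₀⟫ = ⟪b, x₀⟫ + ⟪w - b, x₀⟫ := by
      rw [inner_sub_left]; ring
    have h3 : -(‖w - b‖ * ‖x₀‖) ≤ ⟪w - b, x₀⟫ := by
      have := abs_real_inner_le_norm (w - b) x₀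
      rw [abs_le] at this
      linarith [this.1]
    have h4 : ‖w - b‖ * ‖x₀‖ ≤ ‖w - b‖ ^ 2 / 2 + ‖x₀‖ ^ 2 / 2 := by
      nlinarith [sq_nonneg (‖w - b‖ - ‖x₀‖)]
    simp only [hΦ]
    nlinarith
  set S := Set.range Φ with hS
  have hSne : S.Nonempty := ⟨Φ b, ⟨b, rfl⟩⟩
  have hSbdd : BddBelow S := ⟨⟪b, x₀⟫ - ‖x₀‖ ^ 2, by rintro s ⟨w, rfl⟩; exact hlb w⟩
  set I := sInf S with hI
  have hseq : ∀ k : ℕ, ∃ w : H, Φ w < I + 1 / (k + 1) := by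
    intro k
    have h5 : I < I + 1 / (k + 1) := by
      have : (0:ℝ) < 1 / ((k:ℝ) + 1) := by positivity
      linarith
    obtain ⟨s, hsS, hs⟩ := exists_lt_of_csInf_lt hSne h5
    obtain ⟨w, rfl⟩ := hsS
    exact ⟨w, hs⟩
  choose ws hws using hseq
  have hIle : ∀ w, I ≤ Φ w := fun w => csInf_le hSbdd ⟨w, rfl⟩
  -- midpoint estimate
  have hmid : ∀ w w' : H, Φ ((1 - (1/2 : ℝ)) • w + (1/2 : ℝ) • w') ≤
      (Φ w + Φ w') / 2 - ‖w - w'‖ ^ 2 / 8 := by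
    intro w w'
    have hψ := psiF_convex hCne w w' (θ := 1/2) (by norm_num) (by norm_num)
    have hq : ‖((1 - (1/2 : ℝ)) • w + (1/2 : ℝ) • w') - b‖ ^ 2
        = ‖w - b‖ ^ 2 / 2 + ‖w' - b‖ ^ 2 / 2 - ‖w - w'‖ ^ 2 / 4 := by
      have e1 : ((1 - (1/2 : ℝ)) • w + (1/2 : ℝ) • w') - b
          = (1/2 : ℝ) • ((w - b) + (w' - b)) := by
        norm_num
        module
      rw [e1, norm_smul]
      have e2 := parallelogram_law_with_norm ℝ (w - b) (w' - b)
      have e3 : (w - b) - (w' - b) = w - w' := by abel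
      rw [e3] at e2
      simp only [Real.norm_eq_abs]
      rw [mul_pow, sq_abs]
      nlinarith [e2]
    simp only [hΦ]
    nlinarith [hψ, hq]
  have hcauchy : CauchySeq ws := by
    rw [Metric.cauchySeq_iff]
    intro ε hε
    obtain ⟨N, hN⟩ := exists_nat_gt (8 / ε ^ 2)
    refine ⟨N, fun m hm n hn => ?_⟩
    have h6 : dist (ws m) (ws n) ^ 2 ≤ 4 * (1 / (m + 1) + 1 / (n + 1)) := by
      have h7 := hmid (ws m) (ws n)
      have h8 := hIle ((1 - (1/2 : ℝ)) • ws m + (1/2 : ℝ) • ws n)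
      have h9 := hws m
      have h10 := hws n
      rw [dist_eq_norm]
      nlinarith
    have h11 : (1:ℝ) / (m + 1) ≤ 1 / (N + 1) := by
      apply div_le_div_of_nonneg_left (by norm_num) (by positivity)
      exact_mod_cast Nat.succ_le_succ hm
    have h12 : (1:ℝ) / (n + 1) ≤ 1 / (N + 1) := by
      apply div_le_div_of_nonneg_left (by norm_num) (by positivity)
      exact_mod_cast Nat.succ_le_succ hn
    have h13 : dist (ws m) (ws n) ^ 2 < ε ^ 2 := by
      have h14 : (8:ℝ) / (N + 1) < ε ^ 2 := by
        rw [div_lt_iff₀ (by positivity : (0:ℝ) < (N:ℝ) + 1)]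
        rw [div_lt_iff₀ (by positivity : (0:ℝ) < ε ^ 2)] at hN
        nlinarith [hN, sq_nonneg ε]
      calc dist (ws m) (ws n) ^ 2 ≤ 4 * (1 / (m + 1) + 1 / (n + 1)) := h6
      _ ≤ 4 * (1 / ((N:ℝ) + 1) + 1 / ((N:ℝ) + 1)) := by linarith
      _ = 8 / ((N:ℝ) + 1) := by ring
      _ < ε ^ 2 := h14
    nlinarith [dist_nonneg (x := ws m) (y := ws n), hε]
  obtain ⟨m, hmT⟩ := cauchySeq_tendsto_of_complete hcauchy
  refine ⟨m, fun w => ?_⟩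
  have hΦcont : Continuous Φ := by
    simp only [hΦ]
    exact (psiF_continuous C).add
      (((continuous_id.sub continuous_const).norm.pow 2).div_const 2)
  have hΦm : Tendsto (fun k => Φ (ws k)) atTop (𝓝 (Φ m)) :=
    (hΦcont.tendsto m).comp hmT
  have hup : Tendsto (fun k : ℕ => I + 1 / ((k:ℝ) + 1)) atTop (𝓝 (I + 0)) :=
    tendsto_const_nhds.add tendsto_one_div_add_atTop_nhds_zero_nat
  rw [add_zero] at hup
  have hΦmI : Φ m ≤ I :=
    le_of_tendsto_of_tendsto' hΦm hup fun k => le_of_lt (hws k)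
  exact le_trans (le_trans hΦmI (hIle w)) le_rfl

lemma min_subgrad {C : Set H} (hCne : C.Nonempty) {b m : H}
    (hm : ∀ w, psiF C m + ‖m - b‖ ^ 2 / 2 ≤ psiF C w + ‖w - b‖ ^ 2 / 2) :
    ∀ w, psiF C m + ⟪b - m, w - m⟫ ≤ psiF C w := by
  intro w
  by_contra hcon
  push_neg at hcon
  set ε := psiF C m + ⟪b - m, w - m⟫ - psiF C w with hεd
  have hεpos : 0 < ε := by linarith
  set θ := min 1 (ε / (‖w - m‖ ^ 2 + 1)) with hθd
  have hθpos : 0 < θ := lt_min one_pos (by positivity)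
  have hθ1 : θ ≤ 1 := min_le_left _ _
  set wθ := m + θ • (w - m) with hwθ
  have hwθ2 : wθ = (1 - θ) • m + θ • w := by rw [hwθ]; module
  have hconv : psiF C wθ ≤ (1 - θ) * psiF C m + θ * psiF C w := by
    rw [hwθ2]; exact psiF_convex hCne m w (le_of_lt hθpos) hθ1
  have hmin := hm wθ
  have hquad : ‖wθ - b‖ ^ 2 = ‖m - b‖ ^ 2 + 2 * θ * ⟪m - b, w - m⟫
      + θ ^ 2 * ‖w - m‖ ^ 2 := by
    have e1 : wθ - b = (m - b) + θ • (w - m) := by rw [hwθ]; abel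
    rw [e1, norm_add_sq_real, real_inner_smul_right, norm_smul]
    simp only [Real.norm_eq_abs]
    rw [mul_pow, sq_abs]
    ring
  have hstep : θ * (psiF C m - psiF C w) ≤ θ * ⟪m - b, w - m⟫
      + θ ^ 2 * ‖w - m‖ ^ 2 / 2 := by
    nlinarith [hconv, hmin, hquad]
  have hθsmall : θ * ‖w - m‖ ^ 2 ≤ ε := by
    have h1 : θ ≤ ε / (‖w - m‖ ^ 2 + 1) := min_le_right _ _
    have h2 : 0 < ‖w - m‖ ^ 2 + 1 := by positivity
    have h3 := mul_le_mul_of_nonneg_right h1 (sq_nonneg ‖w - m‖)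
    have h4 : ε / (‖w - m‖ ^ 2 + 1) * ‖w - m‖ ^ 2 ≤ ε := by
      rw [div_mul_eq_mul_div, div_le_iff₀ h2]
      nlinarith [sq_nonneg ‖w - m‖, hεpos]
    linarith
  have hinner : ⟪b - m, w - m⟫ = -⟪m - b, w - m⟫ := by
    rw [← inner_neg_left, neg_sub]
  -- divide by θ
  have hdiv : psiF C m - psiF C w ≤ ⟪m - b, w - m⟫ + θ * ‖w - m‖ ^ 2 / 2 := by
    have := mul_le_mul_of_nonneg_left hstep (le_of_lt (inv_pos.mpr hθpos))
    have hθne : θ ≠ 0 := ne_of_gt hθpos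
    calc psiF C m - psiF C w = θ⁻¹ * (θ * (psiF C m - psiF C w)) := by
          field_simp
    _ ≤ θ⁻¹ * (θ * ⟪m - b, w - m⟫ + θ ^ 2 * ‖w - m‖ ^ 2 / 2) := this
    _ = ⟪m - b, w - m⟫ + θ * ‖w - m‖ ^ 2 / 2 := by field_simp
  rw [hinner] at hcon hεd
  linarith [hdiv, hθsmall]


section FwdCore
variable {C : Set H} {r : ℝ}

/-- The subgradient inequality satisfied by nearest points. -/
lemma proj_subgrad {C : Set H} {u z : H} (hz : z ∈ C)
    (hd : dist u z = infDist u C) (w : H) :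
    psiF C u + ⟪z, w - u⟫ ≤ psiF C w := by
  have h1 := psiF_ge hz w
  have h2 := psiF_eq (C := C) hd
  have h3 : ⟪w, z⟫ = ⟪u, z⟫ + ⟪w - u, z⟫ := by rw [inner_sub_left]; ring
  have h4 : ⟪z, w - u⟫ = ⟪w - u, z⟫ := real_inner_comm _ _
  linarith

/-- Identification of the Minty minimizer's subgradient with the projection. -/
lemma min_eq_proj (hCne : C.Nonempty) (hr : 0 < r) {p : H → H}
    (hp : ∀ s : H, infDist s C < r →
      (p s ∈ C ∧ dist s (p s) = infDist s C) ∧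
      ∀ y ∈ C, dist s y = infDist s C → y = p s)
    (hpc : ContinuousOn p {s : H | infDist s C < r})
    {b m : H}
    (hm : ∀ w, psiF C m + ‖m - b‖ ^ 2 / 2 ≤ psiF C w + ‖w - b‖ ^ 2 / 2)
    (hmU : infDist m C < r) : b - m = p m := by
  have hζ := min_subgrad hCne hm
  have hUopen : IsOpen {s : H | infDist s C < r} :=
    isOpen_lt (continuous_infDist_pt C) continuous_const
  have hkey : ∀ h : H, ⟪(b - m) - p m, h⟫ ≤ 0 := by
    intro h
    obtain ⟨δ', hδ', hball⟩ := Metric.isOpen_iff.mp hUopen m hmU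
    set θ₀ := δ' / (‖h‖ + 1) with hθ₀
    have hθ₀pos : 0 < θ₀ := by positivity
    have hseg : ∀ θ : ℝ, 0 < θ → θ < θ₀ → infDist (m + θ • h) C < r := by
      intro θ hθ hθ'
      have hd : dist (m + θ • h) m < δ' := by
        rw [dist_eq_norm, add_sub_cancel_left, norm_smul, Real.norm_eq_abs,
          abs_of_pos hθ]
        calc θ * ‖h‖ ≤ θ * (‖h‖ + 1) := by nlinarith [norm_nonneg h]
        _ < θ₀ * (‖h‖ + 1) := by nlinarith [norm_nonneg h]
        _ = δ' := by rw [hθ₀]; field_simp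
      exact hball hd
    have hineq : ∀ θ : ℝ, 0 < θ → θ < θ₀ → ⟪(b - m) - p (m + θ • h), h⟫ ≤ 0 := by
      intro θ hθ hθ'
      have hwU := hseg θ hθ hθ'
      have h1 := hζ (m + θ • h)
      have h2 := proj_subgrad (hp _ hwU).1.1 (hp _ hwU).1.2 m
      have e1 : ⟪b - m, (m + θ • h) - m⟫ = θ * ⟪b - m, h⟫ := by
        rw [add_sub_cancel_left, real_inner_smul_right]
      have e2 : ⟪p (m + θ • h), m - (m + θ • h)⟫ = -(θ * ⟪p (m + θ • h), h⟫) := by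
        have e3 : m - (m + θ • h) = -(θ • h) := by abel
        rw [e3, inner_neg_right, real_inner_smul_right]
      rw [e1] at h1
      rw [e2] at h2
      have h5 : θ * ⟪b - m, h⟫ - θ * ⟪p (m + θ • h), h⟫ ≤ 0 := by linarith
      rw [inner_sub_left]
      nlinarith [h5]
    -- pass to the limit θ → 0⁺
    have hc : Continuous (fun θ : ℝ => m + θ • h) :=
      continuous_const.add (continuous_id.smul continuous_const)
    have T1 : Tendsto (fun θ : ℝ => m + θ • h) (𝓝 0) (𝓝 m) :=
      hc.tendsto' 0 m (by simp)
    have T0 : Tendsto (fun θ : ℝ => m + θ • h) (𝓝[>] (0:ℝ))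
        (𝓝[{s : H | infDist s C < r}] m) := by
      rw [tendsto_nhdsWithin_iff]
      constructor
      · exact T1.mono_left nhdsWithin_le_nhds
      · filter_upwards [Ioo_mem_nhdsGT_of_mem
          (show (0:ℝ) ∈ Ico (0:ℝ) θ₀ from ⟨le_refl _, hθ₀pos⟩)] with θ hθ
        exact hseg θ hθ.1 hθ.2
    have Tp : Tendsto (fun θ : ℝ => p (m + θ • h)) (𝓝[>] (0:ℝ)) (𝓝 (p m)) :=
      (hpc m hmU).tendsto.comp T0
    have Tsub : Tendsto (fun θ : ℝ => (b - m) - p (m + θ • h)) (𝓝[>] (0:ℝ))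
        (𝓝 ((b - m) - p m)) := Tp.const_sub (b - m)
    have Tin : Tendsto (fun θ : ℝ => ⟪(b - m) - p (m + θ • h), h⟫) (𝓝[>] (0:ℝ))
        (𝓝 ⟪(b - m) - p m, h⟫) := Tsub.inner tendsto_const_nhds
    refine le_of_tendsto Tin ?_
    filter_upwards [Ioo_mem_nhdsGT_of_mem
      (show (0:ℝ) ∈ Ico (0:ℝ) θ₀ from ⟨le_refl _, hθ₀pos⟩)] with θ hθ
    exact hineq θ hθ.1 hθ.2
  have h8 := hkey ((b - m) - p m)
  rw [real_inner_self_eq_norm_sq] at h8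
  have h9 : ‖(b - m) - p m‖ = 0 :=
    le_antisymm (by nlinarith [norm_nonneg ((b - m) - p m)]) (norm_nonneg _)
  have h10 : (b - m) - p m = 0 := norm_eq_zero.mp h9
  exact sub_eq_zero.mp h10


/-- One bootstrap step: realization radius improves from `τ` to `min T ((1+ε)τ)`. -/
lemma bootstrap (hCne : C.Nonempty) (hr : 0 < r) {p : H → H}
    (hp : ∀ s : H, infDist s C < r →
      (p s ∈ C ∧ dist s (p s) = infDist s C) ∧
      ∀ y ∈ C, dist s y = infDist s C → y = p s)
    (hpc : ContinuousOn p {s : H | infDist s C < r})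
    {x v : H} (hx : x ∈ C) (hv : ‖v‖ = 1) {τ T ε : ℝ}
    (hτ : 0 < τ) (hτT : τ ≤ T) (hT : T < r) (hε : 0 < ε) (hε4 : ε ≤ 1/4)
    (hTr : T * (1 + Real.sqrt (2*ε)) < r)
    (hQ : ∀ y ∈ C, 2*τ*⟪v, y - x⟫ ≤ ‖y - x‖^2) :
    ∀ y ∈ C, 2*(min T ((1+ε)*τ))*⟪v, y - x⟫ ≤ ‖y - x‖^2 := by
  set t := min T ((1+ε)*τ) with htdef
  have hτt : τ ≤ t := le_min hτT (by nlinarith)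
  have htT : t ≤ T := min_le_left _ _
  have htε : t ≤ (1+ε)*τ := min_le_right _ _
  have ht0 : 0 < t := lt_of_lt_of_le hτ hτt
  have htr : t < r := lt_of_le_of_lt htT hT
  set u := x + t • v with hudef
  have hux : dist u x = t := by
    rw [hudef, dist_eq_norm, add_sub_cancel_left, norm_smul, Real.norm_eq_abs,
      abs_of_pos ht0, hv, mul_one]
  have huU : infDist u C < r := lt_of_le_of_lt (by
    rw [← hux]; exact infDist_le_dist_of_mem hx) htr
  set z := p u with hzdef
  have hzC : z ∈ C := (hp u huU).1.1
  have hzd : dist u z = infDist u C := (hp u huU).1.2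
  have hinf_le : infDist u C ≤ t := by rw [← hux]; exact infDist_le_dist_of_mem hx
  -- claim 1 : t^2*(1-4ε) ≤ infDist u C ^ 2
  have claim1 : t^2*(1-4*ε) ≤ infDist u C ^ 2 := by
    refine sq_infDist_ge ⟨x, hx⟩ fun y hy => ?_
    have hexp : dist u y ^ 2 = t^2 - 2*t*⟪v, y - x⟫ + ‖y - x‖^2 := by
      have e1 : u - y = t • v - (y - x) := by rw [hudef]; abel
      rw [dist_eq_norm, e1, norm_sub_sq_real, real_inner_smul_left, norm_smul,
        Real.norm_eq_abs, abs_of_pos ht0, hv, mul_one]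
      ring
    by_cases hcase : ‖y - x‖ ≤ 2*t
    · have hQy := hQ y hy
      by_cases hsign : ⟪v, y - x⟫ ≤ 0
      · nlinarith [sq_nonneg ‖y - x‖, hexp, mul_pos ht0 ht0]
      · push_neg at hsign
        have h2 : 2*t*⟪v, y - x⟫ ≤ (t/τ) * ‖y - x‖^2 := by
          rw [div_mul_eq_mul_div, le_div_iff₀ hτ]
          nlinarith [hQy]
        have h3 : (t - τ)/τ ≤ ε := by
          rw [div_le_iff₀ hτ]; nlinarith
        have h4 : (t/τ) * ‖y - x‖^2 - ‖y - x‖^2 ≤ 4*ε*t^2 := by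
          have e5 : (t/τ) * ‖y - x‖^2 - ‖y - x‖^2 = ((t - τ)/τ) * ‖y - x‖^2 := by
            field_simp
          rw [e5]
          have h6 : 0 ≤ (t-τ)/τ := div_nonneg (by linarith) (le_of_lt hτ)
          have h7 : ‖y - x‖^2 ≤ 4*t^2 := by nlinarith [norm_nonneg (y - x)]
          have h8 := mul_le_mul_of_nonneg_right h3 (sq_nonneg ‖y - x‖)
          have h9 := mul_le_mul_of_nonneg_left h7 (le_of_lt hε)
          linarith
        linarith [hexp, h2, h4]
    · push_neg at hcase
      have h7 : t ≤ dist u y := by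
        have h8 : dist x y ≤ dist x u + dist u y := dist_triangle _ _ _
        have h9 : dist x y = ‖y - x‖ := by rw [dist_eq_norm, norm_sub_rev]
        have h10 : dist x u = t := by rw [dist_comm]; exact hux
        linarith
      nlinarith [dist_nonneg (x := u) (y := y), mul_pos ht0 ht0]
  -- Minty minimization
  set b := u + x with hbdef
  obtain ⟨m, hm⟩ := psiF_min hCne b
  have hζ := min_subgrad hCne hm
  set R := ‖u - m‖ with hRdef
  -- claim 2 : R^2 ≤ (t^2 - infDist u C^2)/2
  have claim2 : R^2 ≤ (t^2 - infDist u C ^2)/2 := by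
    have P1 := hζ u
    have P2 := psiF_ge hx m
    have P3 := psiF_eq (C := C) hzd
    have hub : u - b = -x := by rw [hbdef]; abel
    have hub2 : ‖u - b‖^2 = ‖x‖^2 := by rw [hub, norm_neg]
    have hmb : m - b = (m - u) - x := by rw [hbdef]; abel
    have hmb2 : ‖m - b‖^2 = ‖m - u‖^2 - 2*⟪m - u, x⟫ + ‖x‖^2 := by
      rw [hmb, norm_sub_sq_real]
    have hmu : ‖m - u‖ = R := by rw [hRdef, norm_sub_rev]
    -- lower bound : Φu - Φm ≥ R²/2
    have hq : ‖u - b‖^2 = R^2 - 2*⟪u - m, b - m⟫ + ‖b - m‖^2 := by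
      have e1 : u - b = (u - m) - (b - m) := by abel
      rw [e1, norm_sub_sq_real, hRdef]
    have hbm : ‖b - m‖ = ‖m - b‖ := norm_sub_rev _ _
    have hP1' : psiF C m + ⟪u - m, b - m⟫ ≤ psiF C u := by
      have : ⟪b - m, u - m⟫ = ⟪u - m, b - m⟫ := real_inner_comm _ _
      linarith [P1, this.ge, this.le]
    -- upper bound pieces
    have hiz : ⟪m - u, x⟫ = ⟪m, x⟫ - ⟪u, x⟫ := by rw [inner_sub_left]
    have hbm2 : ‖b - m‖^2 = ‖m - b‖^2 := by rw [hbm]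
    have hmu2 : ‖m - u‖^2 = R^2 := by rw [hmu]
    have low : psiF C m + ‖m - b‖^2/2 + R^2/2 ≤ psiF C u + ‖u - b‖^2/2 := by
      linarith [hP1', hq, hbm2]
    have hfin : R^2 ≤ ⟪u, z⟫ - ⟪u, x⟫ - ‖z‖^2/2 + ‖x‖^2/2 := by
      linarith [low, P2, P3, hub2, hmb2, hmu2, hiz, hm u]
    have hexp2 : ⟪u, z⟫ - ⟪u, x⟫ - ‖z‖^2/2 + ‖x‖^2/2
        = (‖u - x‖^2 - ‖u - z‖^2)/2 := by
      have e2 : ‖u - x‖^2 = ‖u‖^2 - 2*⟪u, x⟫ + ‖x‖^2 := norm_sub_sq_real u x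
      have e3 : ‖u - z‖^2 = ‖u‖^2 - 2*⟪u, z⟫ + ‖z‖^2 := norm_sub_sq_real u z
      linarith
    have e4 : ‖u - x‖ = t := by rw [← dist_eq_norm]; exact hux
    have e5 : ‖u - z‖ = infDist u C := by rw [← dist_eq_norm]; exact hzd
    rw [hexp2, e4, e5] at hfin
    exact hfin
  have claim2' : R^2 ≤ 2*ε*t^2 := by nlinarith [claim1, claim2]
  have hRle : R ≤ t * Real.sqrt (2*ε) := by
    have hsq : (t * Real.sqrt (2*ε))^2 = 2*ε*t^2 := by
      rw [mul_pow, Real.sq_sqrt (by linarith : (0:ℝ) ≤ 2*ε)]; ring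
    refine le_of_sq_le_sq (by positivity) ?_ (norm_nonneg _)
    rw [hsq]; exact claim2'
  -- claim 3 : m ∈ U
  have hmU : infDist m C < r := by
    have h11 : infDist m C ≤ dist m z := infDist_le_dist_of_mem hzC
    have h12 : dist m z ≤ dist m u + dist u z := dist_triangle _ _ _
    have h13 : dist m u = R := by rw [dist_eq_norm, norm_sub_rev, hRdef]
    have h14 : dist u z ≤ t := by rw [hzd]; exact hinf_le
    have h15 : R + t ≤ T * (1 + Real.sqrt (2*ε)) := by
      have h16 : (0:ℝ) ≤ Real.sqrt (2*ε) := Real.sqrt_nonneg _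
      nlinarith [hRle]
    linarith [hTr]
  -- identification
  have hid : b - m = p m := min_eq_proj hCne hr hp hpc hm hmU
  have hpmC : p m ∈ C := (hp m hmU).1.1
  -- let e := p m - x
  set e : H := p m - x with hedef
  -- the two inequalities
  have ineq1 : 2*τ*⟪v, e⟫ ≤ ‖e‖^2 := by
    have := hQ (p m) hpmC
    simpa [hedef] using this
  have ineq2 : (3/2)*‖e‖^2 ≤ t*⟪v, e⟫ := by
    have hhalf := nearest_halfsq (hp m hmU).1.2 hx
    -- m - p m = t • v - 2 • e
    have e6 : m - p m = t • v - (2:ℝ) • e := by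
      obtain ⟨q, hq⟩ : ∃ q, p m = q := ⟨p m, rfl⟩
      rw [hq] at hid ⊢
      rw [hedef, hq, ← hid, hbdef, hudef]
      module
    have e8 : x - p m = -e := by rw [hedef]; abel
    rw [e6, e8] at hhalf
    have e9 : ⟪t • v - (2:ℝ) • e, -e⟫ = -(t*⟪v, e⟫) + 2*‖e‖^2 := by
      rw [inner_neg_right, inner_sub_left, real_inner_smul_left, real_inner_smul_left,
        real_inner_self_eq_norm_sq]
      ring
    rw [e9] at hhalf
    have e10 : ‖-e‖^2 = ‖e‖^2 := by rw [norm_neg]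
    rw [e10] at hhalf
    linarith
  have he0 : e = 0 := by
    have h17 : ‖e‖^2 ≤ 0 := by
      by_cases hsign : ⟪v, e⟫ ≤ 0
      · nlinarith [ineq2, mul_pos ht0 ht0]
      · push_neg at hsign
        have h18 : t*⟪v, e⟫ ≤ (1+ε)*τ*⟪v, e⟫ := by nlinarith
        nlinarith [ineq1, ineq2]
    have := norm_eq_zero.mp (le_antisymm
      (by nlinarith [norm_nonneg e] : ‖e‖ ≤ 0) (norm_nonneg _))
    exact this
  -- hence p u-related: m = u and x is nearest point of u
  have hpm : p m = x := by
    rw [hedef] at he0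
    exact sub_eq_zero.mp he0
  have hmu2 : m = u := by
    have e7 : m = b - (b - m) := by abel
    rw [hid, hpm, hbdef] at e7
    rw [e7]; abel
  have hxnear : dist u x = infDist u C := by
    have h21 := (hp m hmU).1.2
    rw [hpm, hmu2] at h21
    exact h21
  -- conclude
  intro y hy
  have hfinal := nearest_halfsq hxnear hy
  have e11 : u - x = t • v := by rw [hudef]; abel
  rw [e11, real_inner_smul_left] at hfinal
  nlinarith [hfinal]


lemma realization (hCne : C.Nonempty) (hr : 0 < r) (hpr : IsProxRegular C r)
    {x v : H} (hx : x ∈ C) (hv : ‖v‖ = 1) (hvN : v ∈ proxNormalCone C x)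
    {T : ℝ} (hT0 : 0 < T) (hTr : T < r) :
    ∀ y ∈ C, 2*T*⟪v, y - x⟫ ≤ ‖y - x‖^2 := by
  obtain ⟨p, hp, hpc⟩ := hpr
  obtain ⟨σ, hσ, δ, hδ, hprox⟩ := hvN
  set τ₀ := min (min (σ/2) (1/(2*δ))) T with hτ₀
  have hτ₀pos : 0 < τ₀ := lt_min (lt_min (by linarith) (by positivity)) hT0
  have hτ₀T : τ₀ ≤ T := min_le_right _ _
  have hτ₀σ : τ₀ ≤ σ/2 := le_trans (min_le_left _ _) (min_le_left _ _)
  have hτ₀δ : τ₀ ≤ 1/(2*δ) := le_trans (min_le_left _ _) (min_le_right _ _)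
  have hbase : ∀ y ∈ C, 2*τ₀*⟪v, y - x⟫ ≤ ‖y - x‖^2 := by
    intro y hy
    by_cases hcase : ‖y - x‖ ≤ σ
    · have h1 := hprox y hy hcase
      have h2 : τ₀ * (2*δ) ≤ 1 := by
        rw [le_div_iff₀ (by positivity : (0:ℝ) < 2*δ)] at hτ₀δ
        exact hτ₀δ
      nlinarith [sq_nonneg ‖y - x‖, hτ₀pos,
        mul_le_mul_of_nonneg_left h1 (by positivity : (0:ℝ) ≤ 2*τ₀)]
    · push_neg at hcase
      have h3 : ⟪v, y - x⟫ ≤ ‖y - x‖ := by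
        have h4 := real_inner_le_norm v (y - x)
        rw [hv, one_mul] at h4; exact h4
      have hpos : 0 < ‖y - x‖ := lt_trans hσ hcase
      nlinarith [mul_le_mul_of_nonneg_left h3 (by positivity : (0:ℝ) ≤ 2*τ₀)]
  set ε := min (1/4) ((r - T)^2/(8*T^2)) with hεd
  have hεpos : 0 < ε :=
    lt_min (by norm_num) (div_pos (pow_pos (by linarith) 2) (by positivity))
  have hε4 : ε ≤ 1/4 := min_le_left _ _
  have hsqrt : Real.sqrt (2*ε) ≤ (r - T)/(2*T) := by
    have h4 : 2*ε ≤ ((r-T)/(2*T))^2 := by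
      have h5 : ε ≤ (r-T)^2/(8*T^2) := min_le_right _ _
      have e6 : ((r-T)/(2*T))^2 = (r-T)^2/(4*T^2) := by
        rw [div_pow]; ring_nf
      have e7 : (r-T)^2/(4*T^2) = 2 * ((r-T)^2/(8*T^2)) := by ring
      rw [e6, e7]; linarith
    calc Real.sqrt (2*ε) ≤ Real.sqrt (((r-T)/(2*T))^2) := Real.sqrt_le_sqrt h4
    _ = (r-T)/(2*T) := Real.sqrt_sq (le_of_lt (div_pos (by linarith) (by positivity)))
  have hTrε : T * (1 + Real.sqrt (2*ε)) < r := by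
    have h7 : T * (1 + (r-T)/(2*T)) = T + (r-T)/2 := by field_simp
    have h8 : T * (1 + Real.sqrt (2*ε)) ≤ T * (1 + (r-T)/(2*T)) := by
      nlinarith [hsqrt, hT0]
    nlinarith [h7, h8]
  have hiter : ∀ k : ℕ, ∀ y ∈ C, 2*(min T (τ₀*(1+ε)^k))*⟪v, y - x⟫ ≤ ‖y - x‖^2 := by
    intro k
    induction k with
    | zero =>
      simpa [pow_zero, mul_one, min_eq_right hτ₀T] using hbase
    | succ k ih =>
      by_cases hcase : τ₀*(1+ε)^k < T
      · have hmin : min T (τ₀*(1+ε)^k) = τ₀*(1+ε)^k := min_eq_right (le_of_lt hcase)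
        rw [hmin] at ih
        have hstep := bootstrap hCne hr hp hpc hx hv (τ := τ₀*(1+ε)^k) (T := T)
          (by positivity) (le_of_lt hcase) hTr hεpos hε4 hTrε ih
        have e12 : (1+ε)*(τ₀*(1+ε)^k) = τ₀*(1+ε)^(k+1) := by rw [pow_succ]; ring
        rw [e12] at hstep
        exact hstep
      · push_neg at hcase
        have h13 : T ≤ τ₀*(1+ε)^(k+1) := by
          calc T ≤ τ₀*(1+ε)^k := hcase
          _ ≤ τ₀*(1+ε)^(k+1) := by
            rw [pow_succ]
            nlinarith [pow_pos (by linarith : (0:ℝ) < 1+ε) k, hτ₀pos]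
        rw [min_eq_left h13]
        rw [min_eq_left hcase] at ih
        exact ih
  obtain ⟨k, hk⟩ := pow_unbounded_of_one_lt (T/τ₀) (by linarith : (1:ℝ) < 1+ε)
  have h14 : T ≤ τ₀*(1+ε)^k := by
    rw [div_lt_iff₀ hτ₀pos] at hk
    nlinarith
  have h15 := hiter k
  rw [min_eq_left h14] at h15
  exact h15

lemma prox_est (hCne : C.Nonempty) (hr : 0 < r) (hpr : IsProxRegular C r)
    {x ξ : H} (hx : x ∈ C) (hξ : ξ ∈ proxNormalCone C x) :
    ∀ y ∈ C, 2*r*⟪ξ, y - x⟫ ≤ ‖ξ‖ * ‖y - x‖^2 := by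
  intro y hy
  by_cases hξ0 : ξ = 0
  · simp [hξ0]
  · have hnpos : 0 < ‖ξ‖ := norm_pos_iff.mpr hξ0
    set v := ‖ξ‖⁻¹ • ξ with hvdef
    have hv : ‖v‖ = 1 := by
      rw [hvdef, norm_smul, Real.norm_eq_abs, abs_of_pos (inv_pos.mpr hnpos),
        inv_mul_cancel₀ (ne_of_gt hnpos)]
    have hvN : v ∈ proxNormalCone C x := by
      obtain ⟨σ, hσ, δ, hδ, hprox⟩ := hξ
      refine ⟨σ, hσ, δ * ‖ξ‖⁻¹, by positivity, fun y' hy' hy'σ => ?_⟩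
      have h1 := hprox y' hy' hy'σ
      rw [hvdef, real_inner_smul_left]
      have h2 := mul_le_mul_of_nonneg_left h1 (le_of_lt (inv_pos.mpr hnpos))
      calc ‖ξ‖⁻¹ * ⟪ξ, y' - x⟫ ≤ ‖ξ‖⁻¹ * (δ * ‖y' - x‖^2) := h2
      _ = δ * ‖ξ‖⁻¹ * ‖y' - x‖^2 := by ring
    have hQr : 2*r*⟪v, y - x⟫ ≤ ‖y - x‖^2 := by
      by_contra hcon
      push_neg at hcon
      have hIpos : 0 < ⟪v, y - x⟫ := by
        rcases le_or_gt ⟪v, y - x⟫ 0 with h | h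
        · nlinarith [sq_nonneg ‖y - x‖]
        · exact h
      set T := (‖y - x‖^2/(2*⟪v, y - x⟫) + r)/2 with hTd
      have hT1 : ‖y - x‖^2/(2*⟪v, y - x⟫) < r := by
        rw [div_lt_iff₀ (by positivity)]
        nlinarith
      have hT0 : 0 < T := by
        rw [hTd]
        have : (0:ℝ) ≤ ‖y - x‖^2/(2*⟪v, y - x⟫) := by positivity
        linarith
      have hTr : T < r := by rw [hTd]; linarith
      have h16 := realization hCne hr hpr hx hv hvN hT0 hTr y hy
      have h17 : ‖y - x‖^2 < 2*T*⟪v, y - x⟫ := by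
        rw [hTd]
        have e13 : 2*((‖y - x‖^2/(2*⟪v, y - x⟫) + r)/2)*⟪v, y - x⟫
            = ‖y - x‖^2/2 + r*⟪v, y - x⟫ := by
          field_simp
        rw [e13]
        nlinarith
      linarith
    have e14 : ⟪ξ, y - x⟫ = ‖ξ‖ * ⟪v, y - x⟫ := by
      rw [hvdef, real_inner_smul_left]
      field_simp
    rw [e14]
    calc 2*r*(‖ξ‖ * ⟪v, y - x⟫) = ‖ξ‖ * (2*r*⟪v, y - x⟫) := by ring
    _ ≤ ‖ξ‖ * ‖y - x‖^2 := by
      exact mul_le_mul_of_nonneg_left hQr (norm_nonneg _)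


lemma limiting_est (hCne : C.Nonempty) (hr : 0 < r) (hpr : IsProxRegular C r)
    {x ξ : H} (hx : x ∈ C) (hξ : ξ ∈ limitingNormalCone C x) :
    ∀ y ∈ C, 2*r*⟪ξ, y - x⟫ ≤ ‖ξ‖ * ‖y - x‖^2 := by
  obtain ⟨xs, ξs, hxsC, hxs, hξs, hw⟩ := hξ
  -- Banach–Steinhaus : uniform bound on ‖ξs n‖
  have hptwise : ∀ y : H, ∃ c : ℝ, ∀ n, ‖(innerSL ℝ (ξs n)) y‖ ≤ c := by
    intro y
    have ht := hw y
    obtain ⟨A, hA⟩ := ht.bddAbove_range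
    obtain ⟨B, hB⟩ := ht.bddBelow_range
    refine ⟨max A (-B), fun n => ?_⟩
    simp only [innerSL_apply_apply]
    have h1 : ⟪ξs n, y⟫ ≤ A := hA ⟨n, rfl⟩
    have h2 : B ≤ ⟪ξs n, y⟫ := hB ⟨n, rfl⟩
    rw [Real.norm_eq_abs, abs_le]
    constructor
    · have := le_max_right A (-B); linarith
    · have := le_max_left A (-B); linarith
  obtain ⟨M, hM⟩ := banach_steinhaus hptwise
  set M0 := max M 0 with hM0
  have hM0n : 0 ≤ M0 := le_max_right _ _
  have hMn : ∀ n, ‖ξs n‖ ≤ M0 := fun n => by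
    have := hM n
    rw [innerSL_apply_norm] at this
    exact le_trans this (le_max_left _ _)
  -- the estimate for each n, then pass to the limit
  have hglobal : ∀ y ∈ C, 2*r*⟪ξ, y - x⟫ ≤ M0 * ‖y - x‖^2 := by
    intro y hy
    have hn : ∀ n, 2*r*⟪ξs n, y - xs n⟫ ≤ M0 * ‖y - xs n‖^2 := by
      intro n
      have h1 := prox_est hCne hr hpr (hxsC n) (hξs n) y hy
      have h2 : ‖ξs n‖ * ‖y - xs n‖^2 ≤ M0 * ‖y - xs n‖^2 :=
        mul_le_mul_of_nonneg_right (hMn n) (sq_nonneg _)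
      linarith
    -- limits
    have hsplit : ∀ n, ⟪ξs n, y - xs n⟫ = ⟪ξs n, y - x⟫ + ⟪ξs n, x - xs n⟫ := by
      intro n
      rw [← inner_add_right]
      congr 1
      abel
    have hT1 : Tendsto (fun n => ⟪ξs n, y - x⟫) atTop (𝓝 ⟪ξ, y - x⟫) := hw (y - x)
    have hT2 : Tendsto (fun n => ⟪ξs n, x - xs n⟫) atTop (𝓝 0) := by
      have hb : ∀ n, |⟪ξs n, x - xs n⟫| ≤ M0 * ‖x - xs n‖ := fun n => by
        calc |⟪ξs n, x - xs n⟫| ≤ ‖ξs n‖ * ‖x - xs n‖ := abs_real_inner_le_norm _ _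
        _ ≤ M0 * ‖x - xs n‖ := mul_le_mul_of_nonneg_right (hMn n) (norm_nonneg _)
      have hnorm : Tendsto (fun n => M0 * ‖x - xs n‖) atTop (𝓝 (M0 * 0)) := by
        refine Tendsto.const_mul M0 ?_
        have := (tendsto_iff_dist_tendsto_zero.mp hxs)
        refine this.congr fun n => ?_
        rw [dist_eq_norm, norm_sub_rev]
      rw [mul_zero] at hnorm
      refine squeeze_zero_norm ?_ hnorm
      intro n
      rw [Real.norm_eq_abs]
      exact hb n
    have hT3 : Tendsto (fun n => 2*r*⟪ξs n, y - xs n⟫) atTop (𝓝 (2*r*⟪ξ, y - x⟫)) := by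
      have h3 : Tendsto (fun n => ⟪ξs n, y - xs n⟫) atTop (𝓝 (⟪ξ, y - x⟫ + 0)) := by
        refine Tendsto.congr (fun n => (hsplit n).symm) (hT1.add hT2)
      rw [add_zero] at h3
      exact h3.const_mul (2*r)
    have hT4 : Tendsto (fun n => M0 * ‖y - xs n‖^2) atTop (𝓝 (M0 * ‖y - x‖^2)) := by
      refine Tendsto.const_mul M0 ?_
      have h4 : Tendsto (fun n => y - xs n) atTop (𝓝 (y - x)) :=
        tendsto_const_nhds.sub hxs
      exact (h4.norm).pow 2
    exact le_of_tendsto_of_tendsto' hT3 hT4 hn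
  -- hence ξ is itself a proximal normal
  have hξprox : ξ ∈ proxNormalCone C x := by
    refine ⟨1, one_pos, M0/(2*r) + 1, by positivity, fun y hy _ => ?_⟩
    have h5 := hglobal y hy
    have h6 : ⟪ξ, y - x⟫ ≤ M0/(2*r) * ‖y - x‖^2 := by
      rw [div_mul_eq_mul_div, le_div_iff₀ (by positivity : (0:ℝ) < 2*r)]
      nlinarith
    nlinarith [sq_nonneg ‖y - x‖]
  exact prox_est hCne hr hpr hx hξprox

end FwdCore

section Final
variable {C : Set H} {r : ℝ}

theorem forward_direction (hCne : C.Nonempty) (hr : 0 < r) (hpr : IsProxRegular C r) :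
    ∀ x ∈ C, ∀ x' ∈ C, ∀ ξ ∈ limitingNormalCone C x, ∀ ξ' ∈ limitingNormalCone C x',
      ‖ξ‖ ≤ r → ‖ξ'‖ ≤ r → ⟪ξ - ξ', x - x'⟫ ≥ -‖x - x'‖ ^ 2 := by
  intro x hx x' hx' ξ hξ ξ' hξ' hn hn'
  have h1 := limiting_est hCne hr hpr hx hξ x' hx'
  have h2 := limiting_est hCne hr hpr hx' hξ' x hx
  have e1 : ‖x' - x‖ = ‖x - x'‖ := norm_sub_rev _ _
  have hs : (0:ℝ) ≤ ‖x - x'‖^2 := sq_nonneg _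
  have h3 : ‖ξ‖ * ‖x' - x‖^2 ≤ r * ‖x - x'‖^2 := by
    rw [e1]; exact mul_le_mul_of_nonneg_right hn hs
  have h4 : ‖ξ'‖ * ‖x - x'‖^2 ≤ r * ‖x - x'‖^2 :=
    mul_le_mul_of_nonneg_right hn' hs
  have h5 : 2*r*⟪ξ, x' - x⟫ ≤ r * ‖x - x'‖^2 := le_trans h1 h3
  have h6 : 2*r*⟪ξ', x - x'⟫ ≤ r * ‖x - x'‖^2 := le_trans h2 h4
  have e2 : ⟪ξ - ξ', x - x'⟫ = -⟪ξ, x' - x⟫ - ⟪ξ', x - x'⟫ := by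
    rw [inner_sub_left]
    have e3 : x - x' = -(x' - x) := by abel
    rw [e3, inner_neg_right]
  rw [ge_iff_le, e2]
  nlinarith [h5, h6, hr]

end Final
end ProxAux

/-- A nonempty closed set `C` is `r`-prox-regular iff the limiting normal cone is
hypomonotone on the ball of radius `r`: for all `x, x' ∈ C`, `ξ ∈ N^L(C,x)`,
`ξ' ∈ N^L(C,x')` with `‖ξ‖ ≤ r`, `‖ξ'‖ ≤ r`, one has
`⟪ξ - ξ', x - x'⟫ ≥ -‖x - x'‖²`. -/
theorem isProxRegular_iff_hypomonotone (C : Set H) (hC : IsClosed C)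
    (hCne : C.Nonempty) (r : ℝ) (hr : 0 < r) :
    IsProxRegular C r ↔
      ∀ x ∈ C, ∀ x' ∈ C, ∀ ξ ∈ limitingNormalCone C x, ∀ ξ' ∈ limitingNormalCone C x',
        ‖ξ‖ ≤ r → ‖ξ'‖ ≤ r → ⟪ξ - ξ', x - x'⟫ ≥ -‖x - x'‖ ^ 2 := by
  constructor
  · intro hpr
    exact ProxAux.forward_direction hCne hr hpr
  · intro hyp
    exact ProxAux.reverse_direction hC hCne hr hyp
end

section
/- Let H be a real Hilbert space, C ⊆ H a nonempty closed r-prox-regular set with r > 0, and suppose x_n ∈ C, x_n → x strongly in C, ξ_n ∈ N(C, x_n) with ‖ξ_n‖ ≤ β for all n, and ξ_n converges weakly to ξ. Then ξ ∈ N(C, x); in particular ⟨ξ, c − x⟩ ≤ (β/(2r))‖c − x‖² for all c ∈ C. -/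
open Set Filter Metric MeasureTheory Topology
open scoped RealInnerProductSpace NNReal ENNReal

variable {H : Type*} [NormedAddCommGroup H] [InnerProductSpace ℝ H] [CompleteSpace H]

/-- The set `f(x) - N(C,x)`. -/
def flowSet (C : Set H) (f : H → H) (x : H) : Set H :=
  {v | f x - v ∈ proxNormalCone C x}

/-- `x : ℝ → H` is the (locally absolutely continuous) solution of the differential
inclusion `ẋ(t) ∈ f(x(t)) - N(C, x(t))` a.e. on `[0, ∞)`, `x(0) = x₀`, with a.e.
derivative `x'`: it starts at `x₀`, stays in `C`, is a locally Bochner integral of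
`x'` (local absolute continuity), has derivative `x' t` at a.e. `t ≥ 0`, and
satisfies the inclusion at a.e. `t ≥ 0`. -/
structure IsSolutionOf (C : Set H) (f : H → H) (x₀ : H) (x x' : ℝ → H) : Prop where
  init : x 0 = x₀
  memC : ∀ t ≥ (0 : ℝ), x t ∈ C
  locInt : ∀ T > (0 : ℝ), IntegrableOn x' (Icc 0 T)
  integ : ∀ t ≥ (0 : ℝ), x t = x₀ + ∫ s in (0 : ℝ)..t, x' s
  deriv : ∀ᵐ t ∂(volume.restrict (Ici (0 : ℝ))), HasDerivAt x (x' t) t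
  incl : ∀ᵐ t ∂(volume.restrict (Ici (0 : ℝ))), x' t ∈ flowSet C f (x t)


/-!
Everything rests on the hypomonotonicity inequality `⟪ξ, y - z⟫ ≤ ‖ξ‖ / (2r) ‖y - z‖²` for a
proximal normal `ξ` at `z ∈ C`; being a closed condition on `(z, ξ)` with `‖ξ‖ ≤ β`, it passes to
the strong limit of `x_n` and the weak limit of `ξ_n`.

For a unit proximal normal `ν` the inequality follows from `d(z + tν, C) = t` for `t ∈ [0, r]`,
proved by continuous induction on `t`. Small `t` are handled by the local normal inequality. To go
from `τ` to any `t < min (3τ, r)`, use the convex Asplund function `φ = (‖·‖² - d_C²) / 2`: the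
proximal point `V` of `φ` at `2z + tν` has `2z + tν - V ∈ ∂φ(V)`, monotonicity of `∂φ` against
`z ∈ ∂φ(z + τν)` keeps `V` in the tube `d_C < r`, and there continuity of the projection forces
`∂φ(V) = {proj V}`. Comparing `d(z + τν, C) = τ` with `‖V - proj V‖ ≤ ‖V - z‖` then gives
`proj V = z`, hence `V = z + tν` and `d(V, C) = t`.
-/

theorem StrongConvexOn.exists_forall_le {E : Type*} [NormedAddCommGroup E] [NormedSpace ℝ E]
    [CompleteSpace E] {f : E → ℝ} {m : ℝ} (hf : StrongConvexOn univ m f) (hm : 0 < m)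
    (hcont : Continuous f) (hbdd : BddBelow (range f)) : ∃ x, ∀ y, f x ≤ f y := by
  obtain ⟨u, -, hu, hmem⟩ := exists_seq_tendsto_sInf (range_nonempty f) hbdd
  choose xs hxs using hmem
  set μ := sInf (range f)
  have hμ : ∀ y, μ ≤ f y := fun y => csInf_le hbdd (mem_range_self y)
  have hfxs : Tendsto (f ∘ xs) atTop (𝓝 μ) := by simpa [Function.comp_def, hxs] using hu
  have hmid : ∀ j k, dist (xs j) (xs k) ≤ √(8 / m * ((f (xs j) + f (xs k)) / 2 - μ)) := by
    intro j k
    have hconv := hf.2 (mem_univ (xs j)) (mem_univ (xs k)) (by norm_num : (0 : ℝ) ≤ 1 / 2)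
      (by norm_num : (0 : ℝ) ≤ 1 / 2) (by norm_num)
    have hmin := hμ ((1 / 2 : ℝ) • xs j + (1 / 2 : ℝ) • xs k)
    rw [dist_eq_norm]
    refine Real.le_sqrt_of_sq_le ?_
    rw [smul_eq_mul, smul_eq_mul] at hconv
    rw [div_mul_eq_mul_div, le_div_iff₀ hm]
    nlinarith
  have hcauchy : CauchySeq xs := by
    rw [cauchySeq_iff_tendsto_dist_atTop_0]
    refine squeeze_zero (fun _ => dist_nonneg) (fun n => hmid n.1 n.2) ?_
    rw [← prod_atTop_atTop_eq]
    have hgap : Tendsto (fun n : ℕ × ℕ => (f (xs n.1) + f (xs n.2)) / 2 - μ) (atTop ×ˢ atTop)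
        (𝓝 ((μ + μ) / 2 - μ)) :=
      (((hfxs.comp tendsto_fst).add (hfxs.comp tendsto_snd)).div_const 2).sub_const μ
    simpa using (hgap.const_mul (8 / m)).sqrt
  obtain ⟨x, hx⟩ := cauchySeq_tendsto_of_complete hcauchy
  have hfx : f x = μ := tendsto_nhds_unique ((hcont.tendsto x).comp hx) hfxs
  exact ⟨x, fun y => hfx ▸ hμ y⟩

section Asplund

variable {E : Type*} [NormedAddCommGroup E] {C : Set E}

noncomputable def asplund (C : Set E) (v : E) : ℝ := (‖v‖ ^ 2 - infDist v C ^ 2) / 2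

theorem continuous_asplund : Continuous (asplund C) :=
  ((continuous_norm.pow 2).sub ((continuous_infDist_pt C).pow 2)).div_const 2

variable [InnerProductSpace ℝ E]

theorem inner_sub_half_sq_le_asplund {y : E} (hy : y ∈ C) (v : E) :
    ⟪v, y⟫ - ‖y‖ ^ 2 / 2 ≤ asplund C v := by
  have hd : infDist v C ^ 2 ≤ ‖v - y‖ ^ 2 := by
    gcongr
    · exact infDist_nonneg
    · exact dist_eq_norm v y ▸ infDist_le_dist_of_mem hy
  rw [asplund]
  nlinarith [norm_sub_sq_real v y]

theorem asplund_eq_of_dist_eq {v q : E} (hd : dist v q = infDist v C) :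
    asplund C v = ⟪v, q⟫ - ‖q‖ ^ 2 / 2 := by
  rw [asplund, ← hd, dist_eq_norm, norm_sub_sq_real]
  ring

theorem asplund_le (hC : C.Nonempty) {v : E} {c : ℝ}
    (h : ∀ y ∈ C, ⟪v, y⟫ - ‖y‖ ^ 2 / 2 ≤ c) : asplund C v ≤ c := by
  have hsqrt : √(‖v‖ ^ 2 - 2 * c) ≤ infDist v C := by
    refine (le_infDist hC).2 fun y hy => Real.sqrt_le_iff.2 ⟨dist_nonneg, ?_⟩
    rw [dist_eq_norm, norm_sub_sq_real]
    linarith [h y hy]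
  rw [asplund]
  linarith [(Real.sqrt_le_iff.1 hsqrt).2]

theorem convexOn_asplund (hC : C.Nonempty) : ConvexOn ℝ univ (asplund C) := by
  refine ⟨convex_univ, fun v₁ _ v₂ _ a b ha hb hab => asplund_le hC fun y hy => ?_⟩
  have h₁ := mul_le_mul_of_nonneg_left (inner_sub_half_sq_le_asplund hy v₁) ha
  have h₂ := mul_le_mul_of_nonneg_left (inner_sub_half_sq_le_asplund hy v₂) hb
  rw [inner_add_left, real_inner_smul_left, real_inner_smul_left, smul_eq_mul, smul_eq_mul]
  nlinarith

theorem exists_forall_asplund_add_half_sq_le [CompleteSpace E] (hC : C.Nonempty) (w : E) :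
    ∃ V, ∀ v, asplund C V + ‖V - w‖ ^ 2 / 2 ≤ asplund C v + ‖v - w‖ ^ 2 / 2 := by
  obtain ⟨z, hz⟩ := hC
  refine StrongConvexOn.exists_forall_le (m := 1) ?_ one_pos ?_ ?_
  · rw [strongConvexOn_iff_convex]
    have hlin : ConvexOn ℝ univ fun v : E => -⟪w, v⟫ + ‖w‖ ^ 2 / 2 :=
      ((-innerₛₗ ℝ w).convexOn convex_univ).add_const _
    refine ((convexOn_asplund ⟨z, hz⟩).add hlin).congr fun v _ => ?_
    simp only [Pi.add_apply, norm_sub_sq_real, real_inner_comm]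
    ring
  · exact continuous_asplund.add (((continuous_id.sub continuous_const).norm.pow 2).div_const 2)
  · refine ⟨⟪w, z⟫ - ‖z‖ ^ 2, forall_mem_range.2 fun v => ?_⟩
    have := inner_sub_half_sq_le_asplund hz v
    nlinarith [norm_add_sq_real (v - w) z, sq_nonneg ‖v - w + z‖, inner_sub_left (𝕜 := ℝ) v w z]

end Asplund

section Subgradient

variable {E : Type*} [NormedAddCommGroup E] [InnerProductSpace ℝ E]

def IsSubgradient (f : E → ℝ) (x g : E) : Prop := ∀ y, f x + ⟪g, y - x⟫ ≤ f y

theorem IsSubgradient.inner_sub_sub_nonneg {f : E → ℝ} {x y g h : E} (hg : IsSubgradient f x g)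
    (hh : IsSubgradient f y h) : 0 ≤ ⟪g - h, x - y⟫ := by
  have h₁ := hg y
  have h₂ := hh x
  rw [inner_sub_left, inner_sub_right, inner_sub_right] at *
  linarith

theorem isSubgradient_sub_of_forall_add_half_sq_le {f : E → ℝ} (hf : ConvexOn ℝ univ f)
    {V w : E} (hV : ∀ v, f V + ‖V - w‖ ^ 2 / 2 ≤ f v + ‖v - w‖ ^ 2 / 2) :
    IsSubgradient f V (w - V) := by
  intro v
  have hstep : ∀ s ∈ Ioo (0 : ℝ) 1,
      f V + ⟪w - V, v - V⟫ ≤ f v + s * (‖v - V‖ ^ 2 / 2) := by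
    rintro s ⟨hs0, hs1⟩
    have hconv := hf.2 (mem_univ V) (mem_univ v) (sub_nonneg.2 hs1.le) hs0.le (sub_add_cancel 1 s)
    have hmin := hV ((1 - s) • V + s • v)
    have hsq : ‖(1 - s) • V + s • v - w‖ ^ 2
        = ‖V - w‖ ^ 2 - 2 * s * ⟪w - V, v - V⟫ + s ^ 2 * ‖v - V‖ ^ 2 := by
      rw [show (1 - s) • V + s • v - w = (V - w) + s • (v - V) by module, norm_add_sq_real,
        real_inner_smul_right, norm_smul, Real.norm_of_nonneg hs0.le, ← neg_sub w V,
        inner_neg_left]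
      ring
    rw [smul_eq_mul, smul_eq_mul] at hconv
    rw [hsq] at hmin
    nlinarith
  have hlim : Tendsto (fun s : ℝ => f v + s * (‖v - V‖ ^ 2 / 2)) (𝓝[>] 0) (𝓝 (f v)) :=
    tendsto_nhdsWithin_of_tendsto_nhds ((by fun_prop : Continuous _).tendsto' 0 _ (by simp))
  exact ge_of_tendsto hlim (mem_of_superset (Ioo_mem_nhdsGT one_pos) hstep)

variable {C : Set E}

theorem isSubgradient_asplund_of_dist_eq {v q : E} (hq : q ∈ C) (hd : dist v q = infDist v C) :
    IsSubgradient (asplund C) v q := fun y => by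
  have := inner_sub_half_sq_le_asplund hq y
  rw [asplund_eq_of_dist_eq hd, inner_sub_right, real_inner_comm q v]
  linarith [real_inner_comm q y]

theorem IsSubgradient.eq_of_asplund {p : E → E} {V Y : E} (hY : IsSubgradient (asplund C) V Y)
    (hp : ∀ᶠ s in 𝓝 V, p s ∈ C ∧ dist s (p s) = infDist s C) (hcont : ContinuousAt p V) :
    Y = p V := by
  have hray : Tendsto (fun s : ℝ => V + s • (Y - p V)) (𝓝[>] 0) (𝓝 V) :=
    tendsto_nhdsWithin_of_tendsto_nhds ((by fun_prop : Continuous _).tendsto' 0 _ (by simp))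
  have hbound : ∀ᶠ s in 𝓝[>] (0 : ℝ), ⟪Y, Y - p V⟫ ≤ ⟪Y - p V, p (V + s • (Y - p V))⟫ := by
    filter_upwards [hray.eventually hp, self_mem_nhdsWithin] with s ⟨hpC, hpd⟩ hs
    have h₁ := hY (V + s • (Y - p V))
    have h₂ := inner_sub_half_sq_le_asplund hpC V
    rw [asplund_eq_of_dist_eq hpd, add_sub_cancel_left, real_inner_smul_right, inner_add_left,
      real_inner_smul_left] at h₁
    exact le_of_mul_le_mul_left (by linarith) hs
  have hlim : ⟪Y, Y - p V⟫ ≤ ⟪Y - p V, p V⟫ :=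
    ge_of_tendsto (tendsto_const_nhds.inner (hcont.tendsto.comp hray)) hbound
  refine sub_eq_zero.1 (real_inner_self_nonpos.1 ?_)
  rw [inner_sub_left]
  linarith [real_inner_comm (p V) (Y - p V)]

end Subgradient

section ProxRegular

variable {E : Type*} [NormedAddCommGroup E] [InnerProductSpace ℝ E] {C : Set E} {z ν : E}

theorem norm_smul_sub_sq_of_norm_eq_one (hν : ‖ν‖ = 1) (t : ℝ) (b : E) :
    ‖t • ν - b‖ ^ 2 = t ^ 2 - 2 * t * ⟪ν, b⟫ + ‖b‖ ^ 2 := by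
  rw [norm_sub_sq_real, norm_smul, real_inner_smul_left, hν, Real.norm_eq_abs, mul_one, sq_abs]
  ring

theorem dist_add_smul_left_of_norm_eq_one (hν : ‖ν‖ = 1) {t : ℝ} (ht : 0 ≤ t) :
    dist (z + t • ν) z = t := by
  rw [dist_eq_norm, add_sub_cancel_left, norm_smul, hν, mul_one, Real.norm_of_nonneg ht]

theorem eq_zero_of_le_norm_smul_sub_of_norm_sub_two_smul_le {b : E} {τ t : ℝ} (hν : ‖ν‖ = 1)
    (hτ : 0 < τ) (ht₀ : 0 ≤ t) (ht : t < 3 * τ) (h₁ : τ ≤ ‖τ • ν - b‖)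
    (h₂ : ‖t • ν - (2 : ℝ) • b‖ ≤ ‖t • ν - b‖) : b = 0 := by
  have h₁' := pow_le_pow_left₀ hτ.le h₁ 2
  have h₂' := pow_le_pow_left₀ (norm_nonneg _) h₂ 2
  rw [norm_smul_sub_sq_of_norm_eq_one hν] at h₁'
  rw [norm_smul_sub_sq_of_norm_eq_one hν, norm_smul_sub_sq_of_norm_eq_one hν,
    real_inner_smul_right, norm_smul, Real.norm_two] at h₂'
  have hb : ‖b‖ ^ 2 ≤ 0 := by nlinarith
  exact norm_eq_zero.1 (pow_eq_zero_iff two_ne_zero |>.1 (le_antisymm hb (sq_nonneg _)))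

theorem infDist_add_smul_eq_of_forall_inner_le {σ δ t : ℝ} (hz : z ∈ C) (hν : ‖ν‖ = 1)
    (hloc : ∀ y ∈ C, ‖y - z‖ ≤ σ → ⟪ν, y - z⟫ ≤ δ * ‖y - z‖ ^ 2)
    (ht : 0 ≤ t) (htσ : 2 * t ≤ σ) (htδ : 2 * t * δ ≤ 1) : infDist (z + t • ν) C = t := by
  refine le_antisymm
    ((infDist_le_dist_of_mem hz).trans_eq (dist_add_smul_left_of_norm_eq_one hν ht))
    ((le_infDist ⟨z, hz⟩).2 fun y hy => ?_)
  rcases le_or_gt ‖y - z‖ σ with hyσ | hyσ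
  · have hsq := norm_smul_sub_sq_of_norm_eq_one hν t (y - z)
    have hδy := mul_le_mul_of_nonneg_right htδ (sq_nonneg ‖y - z‖)
    have hlocy := hloc y hy hyσ
    rw [dist_eq_norm, show z + t • ν - y = t • ν - (y - z) by abel]
    nlinarith [norm_nonneg (t • ν - (y - z))]
  · have := dist_triangle y (z + t • ν) z
    rw [dist_comm y (z + t • ν), dist_add_smul_left_of_norm_eq_one hν ht, dist_eq_norm y z] at this
    linarith

theorem infDist_add_smul_eq_of_lt_three_mul [CompleteSpace E] {r τ t : ℝ}
    (hreg : IsProxRegular C r) (hz : z ∈ C) (hν : ‖ν‖ = 1) (hτ : 0 < τ) (hτt : τ < t)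
    (ht : t < 3 * τ) (htr : t < r) (hτd : infDist (z + τ • ν) C = τ) :
    infDist (z + t • ν) C = t := by
  obtain ⟨p, hp, hcont⟩ := hreg
  obtain ⟨V, hV⟩ := exists_forall_asplund_add_half_sq_le ⟨z, hz⟩ (z + (z + t • ν))
  have hVsub := isSubgradient_sub_of_forall_add_half_sq_le (convexOn_asplund ⟨z, hz⟩) hV
  have husub : IsSubgradient (asplund C) (z + τ • ν) z := isSubgradient_asplund_of_dist_eq hz
    (by rw [hτd, dist_add_smul_left_of_norm_eq_one hν hτ.le])
  have huV : ‖z + τ • ν - V‖ ≤ t - τ := by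
    have hmono := hVsub.inner_sub_sub_nonneg husub
    rw [show z + (z + t • ν) - V - z = (t - τ) • ν + (z + τ • ν - V) by module,
      ← neg_sub (z + τ • ν), inner_neg_right, inner_add_left, real_inner_smul_left,
      real_inner_self_eq_norm_sq] at hmono
    have hcs := (abs_le.1 (abs_real_inner_le_norm ν (z + τ • ν - V))).1
    rw [hν, one_mul] at hcs
    nlinarith [norm_nonneg (z + τ • ν - V)]
  have hVr : infDist V C < r := by
    have := infDist_le_infDist_add_dist (x := V) (y := z + τ • ν) (s := C)
    rw [hτd, dist_eq_norm, norm_sub_rev] at this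
    linarith
  have htube : IsOpen {s : E | infDist s C < r} :=
    isOpen_lt (continuous_infDist_pt C) continuous_const
  have hY : z + (z + t • ν) - V = p V :=
    hVsub.eq_of_asplund (eventually_of_mem (htube.mem_nhds hVr) fun s hs => (hp s hs).1)
      (hcont.continuousAt (htube.mem_nhds hVr))
  obtain ⟨⟨hpC, hpd⟩, -⟩ := hp V hVr
  generalize p V = P at hY hpC hpd
  obtain rfl : V = z + (z + t • ν) - P := by rw [← hY]; abel
  have hPz : P - z = 0 := by
    refine eq_zero_of_le_norm_smul_sub_of_norm_sub_two_smul_le hν hτ (by linarith) ht ?_ ?_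
    · exact (hτd.symm.trans_le (infDist_le_dist_of_mem hpC)).trans_eq
        (by rw [dist_eq_norm]; congr 1; abel)
    · rw [show t • ν - (2 : ℝ) • (P - z) = z + (z + t • ν) - P - P by module,
        show t • ν - (P - z) = z + (z + t • ν) - P - z by abel, ← dist_eq_norm, ← dist_eq_norm, hpd]
      exact infDist_le_dist_of_mem hz
  obtain rfl : P = z := sub_eq_zero.1 hPz
  rw [add_sub_cancel_left] at hpd
  rw [← hpd, dist_add_smul_left_of_norm_eq_one hν (by linarith)]

theorem infDist_add_smul_eq_of_mem_Icc [CompleteSpace E] {r σ δ t : ℝ} (hreg : IsProxRegular C r)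
    (hz : z ∈ C) (hν : ‖ν‖ = 1) (hσ : 0 < σ) (hδ : 0 < δ)
    (hloc : ∀ y ∈ C, ‖y - z‖ ≤ σ → ⟪ν, y - z⟫ ≤ δ * ‖y - z‖ ^ 2) (ht : t ∈ Icc 0 r) :
    infDist (z + t • ν) C = t := by
  refine IsClosed.Icc_subset_of_forall_mem_nhdsWithin (s := {t | infDist (z + t • ν) C = t}) ?_
    (by simp [infDist_zero_of_mem hz]) ?_ ht
  · exact (isClosed_eq (by fun_prop) continuous_id).inter isClosed_Icc
  rintro s ⟨hs, hs₀, hsr⟩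
  rcases hs₀.eq_or_lt with rfl | hs₀
  · refine mem_of_superset
      (Ioo_mem_nhdsGT (lt_min (half_pos hσ) (by positivity : 0 < 1 / (2 * δ))))
      fun t ⟨ht₀, ht⟩ => infDist_add_smul_eq_of_forall_inner_le hz hν hloc ht₀.le ?_ ?_
    · linarith [ht.trans_le (min_le_left _ _)]
    · have := ht.trans_le (min_le_right _ _)
      rw [lt_div_iff₀ (by positivity)] at this
      linarith
  · exact mem_of_superset (Ioo_mem_nhdsGT (lt_min (by linarith) hsr)) fun t ⟨hst, ht⟩ =>
      infDist_add_smul_eq_of_lt_three_mul hreg hz hν hs₀ hst (ht.trans_le (min_le_left _ _))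
        (ht.trans_le (min_le_right _ _)) hs

theorem inner_le_of_mem_proxNormalCone [CompleteSpace E] {r : ℝ} (hr : 0 < r)
    (hreg : IsProxRegular C r) {ξ y : E} (hz : z ∈ C) (hξ : ξ ∈ proxNormalCone C z) (hy : y ∈ C) :
    ⟪ξ, y - z⟫ ≤ ‖ξ‖ / (2 * r) * ‖y - z‖ ^ 2 := by
  rcases eq_or_ne ξ 0 with rfl | hξ₀
  · simp
  obtain ⟨σ, hσ, δ, hδ, hloc⟩ := hξ
  have hξn : 0 < ‖ξ‖ := norm_pos_iff.2 hξ₀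
  have hξν : ∀ b, ⟪ξ, b⟫ = ‖ξ‖ * ⟪‖ξ‖⁻¹ • ξ, b⟫ := fun b => by
    rw [real_inner_smul_left, mul_inv_cancel_left₀ hξn.ne']
  have hνloc : ∀ y ∈ C, ‖y - z‖ ≤ σ → ⟪‖ξ‖⁻¹ • ξ, y - z⟫ ≤ δ / ‖ξ‖ * ‖y - z‖ ^ 2 := by
    intro y hy hyσ
    rw [div_mul_eq_mul_div, le_div_iff₀ hξn, mul_comm, ← hξν]
    exact hloc y hy hyσ
  have hν : ‖‖ξ‖⁻¹ • ξ‖ = 1 := norm_smul_inv_norm hξ₀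
  have hrd := infDist_add_smul_eq_of_mem_Icc hreg hz hν hσ (div_pos hδ hξn) hνloc ⟨hr.le, le_rfl⟩
  have hr_le : r ≤ ‖r • (‖ξ‖⁻¹ • ξ) - (y - z)‖ :=
    (hrd.symm.trans_le (infDist_le_dist_of_mem hy)).trans_eq (by rw [dist_eq_norm]; congr 1; abel)
  have hsq := pow_le_pow_left₀ hr.le hr_le 2
  rw [norm_smul_sub_sq_of_norm_eq_one hν] at hsq
  rw [hξν, div_mul_eq_mul_div, le_div_iff₀ (by positivity)]
  nlinarith

theorem tendsto_inner_of_weak_of_tendsto {ι : Type*} {l : Filter ι} {ξs xs : ι → E} {ξ x : E}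
    {β : ℝ}    (hβ : ∀ i, ‖ξs i‖ ≤ β) (hweak : ∀ y, Tendsto (fun i => ⟪ξs i, y⟫) l (𝓝 ⟪ξ, y⟫))
    (hx : Tendsto xs l (𝓝 x)) : Tendsto (fun i => ⟪ξs i, xs i⟫) l (𝓝 ⟪ξ, x⟫) := by
  have hsmall : Tendsto (fun i => ⟪ξs i, xs i - x⟫) l (𝓝 0) := by
    refine squeeze_zero_norm (fun i => ?_)
      (by simpa using (tendsto_iff_norm_sub_tendsto_zero.1 hx).const_mul β)
    exact (norm_inner_le_norm _ _).trans (mul_le_mul_of_nonneg_right (hβ i) (norm_nonneg _))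
  simpa [inner_sub_right] using (hweak x).add hsmall

end ProxRegular

theorem normal_cone_weak_closed_general (C : Set H)
    (r : ℝ) (hr : 0 < r) (hreg : IsProxRegular C r)
    (x ξ : H) (β : ℝ) (xs ξs : ℕ → H)
    (hxs : ∀ n, xs n ∈ C) (hxconv : Tendsto xs atTop (nhds x))
    (hξs : ∀ n, ξs n ∈ proxNormalCone C (xs n))
    (hβ : ∀ n, ‖ξs n‖ ≤ β)
    (hweak : ∀ y : H, Tendsto (fun n => ⟪ξs n, y⟫) atTop (nhds ⟪ξ, y⟫)) :
    ξ ∈ proxNormalCone C x ∧ ∀ c ∈ C, ⟪ξ, c - x⟫ ≤ β / (2 * r) * ‖c - x‖ ^ 2 := by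
  have hβ₀ : 0 ≤ β := (norm_nonneg _).trans (hβ 0)
  have hglobal : ∀ c ∈ C, ⟪ξ, c - x⟫ ≤ β / (2 * r) * ‖c - x‖ ^ 2 := by
    intro c hc
    have hc_lim : Tendsto (fun n => c - xs n) atTop (𝓝 (c - x)) := tendsto_const_nhds.sub hxconv
    refine le_of_tendsto_of_tendsto' (tendsto_inner_of_weak_of_tendsto hβ hweak hc_lim)
      (((continuous_norm.pow 2).tendsto _).comp hc_lim |>.const_mul _) fun n => ?_
    calc ⟪ξs n, c - xs n⟫ ≤ ‖ξs n‖ / (2 * r) * ‖c - xs n‖ ^ 2 :=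
          inner_le_of_mem_proxNormalCone hr hreg (hxs n) (hξs n) hc
      _ ≤ β / (2 * r) * ‖c - xs n‖ ^ 2 := by gcongr; exact hβ n
  refine ⟨⟨1, one_pos, β / (2 * r) + 1, by positivity, fun y hy _ => ?_⟩, hglobal⟩
  nlinarith [hglobal y hy, sq_nonneg ‖y - x‖]

/-- Weak sequential closedness of the normal cone of a prox-regular set: if
`x_n ∈ C`, `x_n → x` strongly, `ξ_n ∈ N(C, x_n)` with `‖ξ_n‖ ≤ β`, and `ξ_n ⇀ ξ`
weakly, then `ξ ∈ N(C, x)`; in particular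
`⟪ξ, c - x⟫ ≤ (β/(2r)) ‖c - x‖²` for all `c ∈ C`. -/
theorem normal_cone_weak_closed (C : Set H) (hC : IsClosed C) (hCne : C.Nonempty)
    (r : ℝ) (hr : 0 < r) (hreg : IsProxRegular C r)
    (x ξ : H) (β : ℝ) (xs ξs : ℕ → H)
    (hxs : ∀ n, xs n ∈ C) (hxconv : Tendsto xs atTop (nhds x))
    (hξs : ∀ n, ξs n ∈ proxNormalCone C (xs n))
    (hβ : ∀ n, ‖ξs n‖ ≤ β)
    (hweak : ∀ y : H, Tendsto (fun n => ⟪ξs n, y⟫) atTop (nhds ⟪ξ, y⟫)) :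
    ξ ∈ proxNormalCone C x ∧ ∀ c ∈ C, ⟪ξ, c - x⟫ ≤ β / (2 * r) * ‖c - x‖ ^ 2 :=
  normal_cone_weak_closed_general C r hr hreg x ξ β xs ξs hxs hxconv hξs hβ hweak
end

section
/- Let H be a real Hilbert space, C ⊆ H a nonempty closed r-prox-regular set (r > 0), f : H → H a k-Lipschitz continuous function, x₀ ∈ C, and let x(·) be the unique locally absolutely continuous solution of ẋ(t) ∈ f(x(t)) − N(C, x(t)) a.e. on [0,∞) with x(0) = x₀, satisfying ‖ẋ(t) − f(x(t))‖ ≤ ‖f(x(t))‖ a.e. Then for almost every t ∈ [0,∞), ẋ(t) equals the minimal norm element of the set f(x(t)) − N(C, x(t)). -/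
/-!
At a time `t > 0` the curve `x` stays in `C` near `t`, so a proximal normal `ξ` at `x t` makes
`s ↦ ⟪ξ, x s - x t⟫ - δ ‖x s - x t‖²` attain a local maximum at `t`; the derivative of this
function at `t` is `⟪ξ, ẋ t⟫`. Fermat's rule then makes `ẋ t` orthogonal to `N(C, x t)`.
If `f (x t) - ẋ t` and `f (x t) - u` are both normals, then `⟪ẋ t, ẋ t⟫ = ⟪u, ẋ t⟫ ≤ ‖u‖ ‖ẋ t‖`.
-/

open Set Filter Metric MeasureTheory Topology
open scoped RealInnerProductSpace NNReal ENNReal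

variable {H : Type*} [NormedAddCommGroup H] [InnerProductSpace ℝ H] [CompleteSpace H]

section ProxNormal

variable {E : Type*} [NormedAddCommGroup E] [InnerProductSpace ℝ E]

theorem exists_isLocalMaxOn_of_mem_proxNormalCone {C : Set E} {y ξ : E}
    (hξ : ξ ∈ proxNormalCone C y) :
    ∃ δ : ℝ, IsLocalMaxOn (fun z => ⟪ξ, z - y⟫ - δ * ‖z - y‖ ^ 2) C y := by
  obtain ⟨σ, hσ, δ, -, hle⟩ := hξ
  refine ⟨δ, ?_⟩
  filter_upwards [inter_mem_nhdsWithin C (closedBall_mem_nhds y hσ)] with z ⟨hzC, hz⟩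
  simpa using hle z hzC (mem_closedBall_iff_norm.mp hz)

theorem inner_eq_zero_of_mem_proxNormalCone_of_hasDerivAt {C : Set E} {c : ℝ → E} {t : ℝ}
    {v ξ : E} (hC : ∀ᶠ s in 𝓝 t, c s ∈ C) (hc : HasDerivAt c v t)
    (hξ : ξ ∈ proxNormalCone C (c t)) : ⟪ξ, v⟫ = 0 := by
  obtain ⟨δ, hmax⟩ := exists_isLocalMaxOn_of_mem_proxNormalCone hξ
  have hmax' : IsLocalMax (fun s => ⟪ξ, c s - c t⟫ - δ * ‖c s - c t‖ ^ 2) t :=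
    hmax.comp_tendsto (tendsto_nhdsWithin_iff.mpr ⟨hc.continuousAt, hC⟩)
  have hderiv : HasDerivAt (fun s => ⟪ξ, c s - c t⟫ - δ * ‖c s - c t‖ ^ 2) ⟪ξ, v⟫ t := by
    have hsub := hc.sub_const (c t)
    have hlin : HasDerivAt (fun s => ⟪ξ, c s - c t⟫) ⟪ξ, v⟫ t :=
      (innerSL ℝ ξ).hasFDerivAt.comp_hasDerivAt t hsub
    have hsq : HasDerivAt (fun s => δ * ‖c s - c t‖ ^ 2) 0 t := by
      simpa using hsub.norm_sq.const_mul δ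
    exact (hlin.sub hsq).congr_deriv (sub_zero _)
  exact hmax'.hasDerivAt_eq_zero hderiv

theorem norm_le_of_mem_flowSet {C : Set E} {f : E → E} {y v u : E} (hv : v ∈ flowSet C f y)
    (hu : u ∈ flowSet C f y) (horth : ∀ ξ ∈ proxNormalCone C y, ⟪ξ, v⟫ = 0) : ‖v‖ ≤ ‖u‖ := by
  have hvv : ⟪f y - v, v⟫ = 0 := horth _ hv
  have huv : ⟪f y - u, v⟫ = 0 := horth _ hu
  rw [inner_sub_left] at hvv huv
  have hsq : ‖v‖ * ‖v‖ ≤ ‖u‖ * ‖v‖ := by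
    calc ‖v‖ * ‖v‖ = ⟪u, v⟫ := by rw [← real_inner_self_eq_norm_mul_norm]; linarith
      _ ≤ ‖u‖ * ‖v‖ := real_inner_le_norm u v
  rcases (norm_nonneg v).eq_or_lt with hzero | hpos
  · exact hzero ▸ norm_nonneg u
  · exact le_of_mul_le_mul_right hsq hpos

end ProxNormal

theorem derivative_eq_min_norm_general (C : Set H)
    (f : H → H)
    (x₀ : H)
    (x x' : ℝ → H) (hsol : IsSolutionOf C f x₀ x x') :
    ∀ᵐ t ∂(volume.restrict (Ici (0 : ℝ))),
      x' t ∈ flowSet C f (x t) ∧ ∀ u ∈ flowSet C f (x t), ‖x' t‖ ≤ ‖u‖ := by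
  have hpos : ∀ᵐ t ∂(volume.restrict (Ici (0 : ℝ))), 0 < t := by
    rw [← Measure.restrict_congr_set Ioi_ae_eq_Ici]
    exact ae_restrict_mem measurableSet_Ioi
  filter_upwards [hsol.deriv, hsol.incl, hpos] with t hderiv hincl ht
  have hmem : ∀ᶠ s in 𝓝 t, x s ∈ C := by
    filter_upwards [Ioi_mem_nhds ht] with s hs using hsol.memC s hs.le
  exact ⟨hincl, fun u hu => norm_le_of_mem_flowSet hincl hu fun ξ hξ =>
    inner_eq_zero_of_mem_proxNormalCone_of_hasDerivAt hmem hderiv hξ⟩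

/-- Theorem 3.5 (i): for a.e. `t ∈ [0,∞)`, `ẋ(t)` is the minimal norm element of
the set `f(x(t)) - N(C, x(t))`. -/
theorem derivative_eq_min_norm (C : Set H) (hC : IsClosed C) (hCne : C.Nonempty)
    (r : ℝ) (hr : 0 < r) (hreg : IsProxRegular C r)
    (f : H → H) (k : ℝ≥0) (hf : LipschitzWith k f)
    (x₀ : H) (hx₀ : x₀ ∈ C)
    (x x' : ℝ → H) (hsol : IsSolutionOf C f x₀ x x')
    (hbd : ∀ᵐ t ∂(volume.restrict (Ici (0 : ℝ))), ‖x' t - f (x t)‖ ≤ ‖f (x t)‖) :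
    ∀ᵐ t ∂(volume.restrict (Ici (0 : ℝ))),
      x' t ∈ flowSet C f (x t) ∧ ∀ u ∈ flowSet C f (x t), ‖x' t‖ ≤ ‖u‖ :=
  derivative_eq_min_norm_general C f x₀ x x' hsol
end

section
/- Let H be a real Hilbert space, C ⊆ H a nonempty closed r-prox-regular set (r > 0), and V : H → ℝ a differentiable function whose gradient ∇V is Lipschitz continuous. Let x(·) be the unique locally absolutely continuous solution of ẋ(t) ∈ −∇V(x(t)) − N(C, x(t)) a.e. on [0,∞) with x(0) = x₀ ∈ C. Then for almost every t ≥ 0: (d/dt) V(x(t)) + ‖ẋ(t)‖² = 0. In particular t ↦ V(x(t)) is nonincreasing, i.e. V is a Lyapunov function of the system. -/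
open Set Filter Metric MeasureTheory Topology
open scoped RealInnerProductSpace NNReal ENNReal

variable {H : Type*} [NormedAddCommGroup H] [InnerProductSpace ℝ H] [CompleteSpace H]

/-! At almost every `t > 0` the solution is differentiable and stays in `C` on both sides of `t`,
so its velocity is orthogonal to every proximal normal vector at `x t`, in particular to
`-∇V(x t) - ẋ t`. Hence `⟪∇V(x t), ẋ t⟫ = -‖ẋ t‖²`, and the chain rule gives the energy identity.
An a.e. nonpositive derivative does not by itself make `V ∘ x` antitone; but `V` is Lipschitz on
bounded sets and `x` is absolutely continuous, so `V ∘ x` is absolutely continuous and is the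
integral of its derivative. -/

namespace AbsolutelyContinuousOnInterval

variable {X Y : Type*} [PseudoMetricSpace X] [PseudoMetricSpace Y]

theorem of_dist_le_mul {f : ℝ → X} {g : ℝ → Y} {a b : ℝ} {K : ℝ≥0}
    (hg : AbsolutelyContinuousOnInterval g a b)
    (hfg : ∀ s ∈ uIcc a b, ∀ t ∈ uIcc a b, dist (f s) (f t) ≤ K * dist (g s) (g t)) :
    AbsolutelyContinuousOnInterval f a b := by
  rw [absolutelyContinuousOnInterval_iff] at hg ⊢
  intro ε hε
  obtain ⟨δ, hδ, hgδ⟩ := hg (ε / (K + 1)) (by positivity)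
  refine ⟨δ, hδ, fun E hE hEδ => ?_⟩
  calc ∑ i ∈ Finset.range E.1, dist (f (E.2 i).1) (f (E.2 i).2)
      ≤ K * ∑ i ∈ Finset.range E.1, dist (g (E.2 i).1) (g (E.2 i).2) := by
        rw [Finset.mul_sum]
        exact Finset.sum_le_sum fun i hi => hfg _ (hE.1 i hi).1 _ (hE.1 i hi).2
    _ ≤ K * (ε / (K + 1)) := by gcongr; exact (hgδ E hE hEδ).le
    _ < (K + 1) * (ε / (K + 1)) := by gcongr; linarith
    _ = ε := by field_simp

end AbsolutelyContinuousOnInterval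

theorem LipschitzOnWith.comp_absolutelyContinuousOnInterval {X Y : Type*}
    [PseudoMetricSpace X] [PseudoMetricSpace Y] {f : X → Y} {g : ℝ → X} {s : Set X}
    {K : ℝ≥0} {a b : ℝ} (hf : LipschitzOnWith K f s)
    (hg : AbsolutelyContinuousOnInterval g a b) (hgs : MapsTo g (uIcc a b) s) :
    AbsolutelyContinuousOnInterval (f ∘ g) a b :=
  hg.of_dist_le_mul fun _ hu _ hv => hf.dist_le_mul _ (hgs hu) _ (hgs hv)

theorem IntervalIntegrable.absolutelyContinuousOnInterval_intervalIntegral'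
    {E : Type*} [NormedAddCommGroup E] [NormedSpace ℝ E] {f : ℝ → E} {a b c : ℝ}
    (hf : IntervalIntegrable f volume a b) (hc : c ∈ uIcc a b) :
    AbsolutelyContinuousOnInterval (fun t => ∫ u in c..t, f u) a b := by
  refine (hf.norm.absolutelyContinuousOnInterval_intervalIntegral hc).of_dist_le_mul
    (K := 1) fun s hs t ht => ?_
  have hint : ∀ {p q}, p ∈ uIcc a b → q ∈ uIcc a b → IntervalIntegrable f volume p q :=
    fun hp hq => hf.mono_set (uIcc_subset_uIcc hp hq)
  rw [dist_eq_norm, dist_eq_norm, NNReal.coe_one, one_mul,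
    intervalIntegral.integral_interval_sub_left (hint hc hs) (hint hc ht),
    intervalIntegral.integral_interval_sub_left (hint hc hs).norm (hint hc ht).norm,
    Real.norm_eq_abs]
  exact intervalIntegral.norm_integral_le_abs_integral_norm

theorem antitoneOn_of_ae_deriv_nonpos {f : ℝ → ℝ} {s : Set ℝ} (hs : s.OrdConnected)
    (hf : ∀ a ∈ s, ∀ b ∈ s, AbsolutelyContinuousOnInterval f a b)
    (hf' : ∀ᵐ t ∂(volume.restrict s), deriv f t ≤ 0) : AntitoneOn f s := by
  intro a ha b hb hab
  rw [← sub_nonpos, ← (hf a ha b hb).integral_deriv_eq_sub]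
  refine (intervalIntegral.integral_mono_ae_restrict hab (hf a ha b hb).intervalIntegrable_deriv
    intervalIntegrable_const ?_).trans_eq intervalIntegral.integral_zero
  exact ae_restrict_of_ae_restrict_of_subset (hs.out ha hb) hf'

theorem lipschitzOnWith_closedBall_of_lipschitzWith_gradient {V : H → ℝ} {V' : H → H}
    (hV : ∀ y, HasGradientAt V (V' y) y) {k : ℝ≥0} (hV' : LipschitzWith k V')
    (c : H) (R : ℝ≥0) : LipschitzOnWith (‖V' c‖₊ + k * R) V (closedBall c R) := by
  refine (convex_closedBall c R).lipschitzOnWith_of_nnnorm_hasFDerivWithin_le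
    (fun y _ => (hV y).hasFDerivAt.hasFDerivWithinAt) fun y hy => ?_
  have hyc : ‖V' y - V' c‖₊ ≤ k * R := by
    calc ‖V' y - V' c‖₊ ≤ k * ‖y - c‖₊ := by
          simpa only [← nndist_eq_nnnorm] using hV'.nndist_le y c
      _ ≤ k * R := by gcongr; exact mem_closedBall_iff_norm.1 hy
  calc ‖InnerProductSpace.toDual ℝ H (V' y)‖₊ = ‖V' y‖₊ := by simp
    _ ≤ ‖V' c‖₊ + ‖V' y - V' c‖₊ := by
        simpa using nnnorm_add_le (V' c) (V' y - V' c)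
    _ ≤ ‖V' c‖₊ + k * R := by gcongr

theorem AbsolutelyContinuousOnInterval.comp_of_lipschitzWith_gradient {V : H → ℝ} {V' : H → H}
    (hV : ∀ y, HasGradientAt V (V' y) y) {k : ℝ≥0} (hV' : LipschitzWith k V')
    {γ : ℝ → H} {a b : ℝ} (hγ : AbsolutelyContinuousOnInterval γ a b) :
    AbsolutelyContinuousOnInterval (fun t => V (γ t)) a b := by
  obtain ⟨R, hR₀, hR⟩ := (isCompact_uIcc.image_of_continuousOn hγ.continuousOn).isBounded
    |>.subset_closedBall_lt 0 0
  lift R to ℝ≥0 using hR₀.le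
  exact (lipschitzOnWith_closedBall_of_lipschitzWith_gradient hV hV' 0 R
    ).comp_absolutelyContinuousOnInterval hγ fun t ht => hR (mem_image_of_mem γ ht)

section ProxNormalCone

variable {E : Type*} [NormedAddCommGroup E] [InnerProductSpace ℝ E]

theorem inner_eq_zero_of_hasDerivAt_of_mem_proxNormalCone {C : Set E} {γ : ℝ → E} {t : ℝ}
    {v ξ : E} (hγ : HasDerivAt γ v t) (hγC : ∀ᶠ s in 𝓝 t, γ s ∈ C)
    (hξ : ξ ∈ proxNormalCone C (γ t)) : ⟪ξ, v⟫ = 0 := by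
  obtain ⟨σ, hσ, δ, -, hξ⟩ := hξ
  have hmax : IsLocalMax (fun s => ⟪ξ, γ s - γ t⟫ - δ * ‖γ s - γ t‖ ^ 2) t := by
    filter_upwards [hγC, hγ.continuousAt (closedBall_mem_nhds (γ t) hσ)] with s hsC hsσ
    simpa using hξ (γ s) hsC (mem_closedBall_iff_norm.1 hsσ)
  have hγ₀ : HasDerivAt (fun s => γ s - γ t) v t := hγ.sub_const _
  have hsq : HasDerivAt (fun s => ‖γ s - γ t‖ ^ 2) 0 t := by
    simpa using hγ₀.norm_sq
  refine hmax.hasDerivAt_eq_zero ?_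
  simpa using ((hasDerivAt_const t ξ).inner ℝ hγ₀).fun_sub (hsq.const_mul δ)

namespace IsSolutionOf

variable {C : Set E} {f : E → E} {x₀ : E} {x x' : ℝ → E}

theorem ae_inner_eq_norm_sq (hsol : IsSolutionOf C f x₀ x x') :
    ∀ᵐ t ∂(volume.restrict (Ici (0 : ℝ))), ⟪f (x t), x' t⟫ = ‖x' t‖ ^ 2 := by
  rw [← restrict_Ioi_eq_restrict_Ici]
  filter_upwards [ae_restrict_mem measurableSet_Ioi,
    ae_restrict_of_ae_restrict_of_subset Ioi_subset_Ici_self hsol.deriv,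
    ae_restrict_of_ae_restrict_of_subset Ioi_subset_Ici_self hsol.incl] with t ht hderiv hincl
  have hC : ∀ᶠ s in 𝓝 t, x s ∈ C :=
    (eventually_gt_nhds ht).mono fun s hs => hsol.memC s hs.le
  have := inner_eq_zero_of_hasDerivAt_of_mem_proxNormalCone hderiv hC hincl
  rwa [inner_sub_left, real_inner_self_eq_norm_sq, sub_eq_zero] at this

theorem absolutelyContinuousOnInterval (hsol : IsSolutionOf C f x₀ x x') {a b : ℝ}
    (ha : 0 ≤ a) (hb : 0 ≤ b) : AbsolutelyContinuousOnInterval x a b := by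
  set T := max a b + 1
  have hT : 0 < T := by positivity
  have hint : IntervalIntegrable x' volume 0 T :=
    (intervalIntegrable_iff_integrableOn_Icc_of_le hT.le).2 (hsol.locInt T hT)
  have hprim := hint.absolutelyContinuousOnInterval_intervalIntegral'
    (left_mem_uIcc (a := 0) (b := T))
  refine (hprim.of_dist_le_mul (K := 1) fun s hs t ht => ?_).mono ?_
  · rw [uIcc_of_le hT.le] at hs ht
    rw [hsol.integ s hs.1, hsol.integ t ht.1, dist_add_left, NNReal.coe_one, one_mul]
  · rw [uIcc_of_le hT.le]
    exact uIcc_subset_Icc ⟨ha, by linarith [le_max_left a b]⟩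
      ⟨hb, by linarith [le_max_right a b]⟩

end IsSolutionOf

end ProxNormalCone

theorem energy_identity_general (C : Set H)
    (V : H → ℝ) (V' : H → H) (hV : ∀ y, HasGradientAt V (V' y) y)
    (k : ℝ≥0) (hV' : LipschitzWith k V') (x₀ : H) (x x' : ℝ → H)
    (hsol : IsSolutionOf C (fun y => -V' y) x₀ x x') :
    (∀ᵐ t ∂(volume.restrict (Ici (0 : ℝ))),
      HasDerivAt (fun s => V (x s)) (-‖x' t‖ ^ 2) t) ∧
    AntitoneOn (fun t => V (x t)) (Ici 0) := by
  have hderiv : ∀ᵐ t ∂(volume.restrict (Ici (0 : ℝ))),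
      HasDerivAt (fun s => V (x s)) (-‖x' t‖ ^ 2) t := by
    filter_upwards [hsol.deriv, hsol.ae_inner_eq_norm_sq] with t hxt hinner
    rw [inner_neg_left, neg_eq_iff_eq_neg] at hinner
    simpa [hinner, Function.comp_def] using (hV (x t)).hasFDerivAt.comp_hasDerivAt t hxt
  refine ⟨hderiv, antitoneOn_of_ae_deriv_nonpos ordConnected_Ici
    (fun a ha b hb => (hsol.absolutelyContinuousOnInterval ha hb).comp_of_lipschitzWith_gradient
      hV hV') ?_⟩
  filter_upwards [hderiv] with t ht
  rw [ht.deriv]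
  exact neg_nonpos.2 (sq_nonneg _)

/-- Proposition 3.6, energy identity: for `V : H → ℝ` differentiable with Lipschitz
gradient `∇V`, along the solution of `ẋ ∈ -∇V(x) - N(C,x)`, `x(0) = x₀ ∈ C`, one
has `(d/dt) V(x(t)) + ‖ẋ(t)‖² = 0` for a.e. `t ≥ 0`; in particular `t ↦ V(x(t))`
is nonincreasing on `[0,∞)`, i.e. `V` is a Lyapunov function of the system. -/
theorem energy_identity (C : Set H) (hC : IsClosed C) (hCne : C.Nonempty)
    (r : ℝ) (hr : 0 < r) (hreg : IsProxRegular C r)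
    (V : H → ℝ) (V' : H → H) (hV : ∀ y, HasGradientAt V (V' y) y)
    (k : ℝ≥0) (hV' : LipschitzWith k V')
    (x₀ : H) (hx₀ : x₀ ∈ C)
    (x x' : ℝ → H) (hsol : IsSolutionOf C (fun y => -V' y) x₀ x x') :
    (∀ᵐ t ∂(volume.restrict (Ici (0 : ℝ))),
      HasDerivAt (fun s => V (x s)) (-‖x' t‖ ^ 2) t) ∧
    AntitoneOn (fun t => V (x t)) (Ici 0) :=
  energy_identity_general C V V' hV k hV' x₀ x x' hsol
end
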